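/- arXiv:2603.05733 — 8 statements merged into one kernel-verified Lean document; each statement's English description precedes it below -/
import Mathlib

section
/- Let E be a locally convex-solid Riesz space and X a Banach space, and let T : E → X be an operator. If the second adjoint T′′ : E′′ → X′′ is order weakly compact, then T is generalized b-weakly compact (and hence order weakly compact). -/
open Filter Topology Set Bornology

section SetDefs

variable (E : Type*) [AddCommGroup E] [Lattice E] [Module ℝ E] [TopologicalSpace E]

/-- A solid subset of a Riesz space. -/
def IsSolidSet (s : Set E) : Prop := ∀ x ∈ s, ∀ y : E, |y| ≤ |x| → y ∈ s

/-- A locally convex-solid Riesz space: the (Hausdorff linear) topology admits a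
neighborhood basis of zero consisting of convex solid sets. -/
def IsLocallyConvexSolid : Prop :=
  (nhds (0 : E)).HasBasis (fun s : Set E => s ∈ nhds (0 : E) ∧ Convex ℝ s ∧ IsSolidSet E s) id

/-- A continuous linear functional is positive. -/
def PosFunctional (f : E →L[ℝ] ℝ) : Prop := ∀ x : E, 0 ≤ x → 0 ≤ f x

/-- Dual (cone) order on the topological dual E'. -/
def DualLE (f g : E →L[ℝ] ℝ) : Prop := ∀ x : E, 0 ≤ x → f x ≤ g x

/-- Dual cone order on the strong bidual E''. -/
def BidualLE (φ ψ : (E →L[ℝ] ℝ) →L[ℝ] ℝ) : Prop :=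
  ∀ f : E →L[ℝ] ℝ, PosFunctional E f → φ f ≤ ψ f

end SetDefs

section ConeDefs

variable (Y : Type*) [AddCommGroup Y] [Module ℝ Y] [TopologicalSpace Y]

/-- A set is topologically b-order bounded in a space `Y` whose positive cone is `pos`:
it is order bounded in the strong bidual `Y''` (with the dual-cone ordering), under the
canonical embedding `a ↦ (f ↦ f a)`. -/
def TopBOrderBoundedCone (pos : Y → Prop) (A : Set Y) : Prop :=
  ∃ φ ψ : (Y →L[ℝ] ℝ) →L[ℝ] ℝ, ∀ a ∈ A, ∀ f : Y →L[ℝ] ℝ,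
    (∀ y : Y, pos y → 0 ≤ f y) → φ f ≤ f a ∧ f a ≤ ψ f

variable (X : Type*) [NormedAddCommGroup X] [NormedSpace ℝ X]

/-- Relative weak compactness in a normed space. -/
def RelWeaklyCompact (s : Set X) : Prop :=
  IsCompact (closure ((toWeakSpace ℝ X) '' s))

/-- Generalized b-weakly compact map relative to a positive cone `pos` on the domain:
it maps topologically b-order bounded sets (w.r.t. `pos`) to relatively weakly compact
sets. -/
def IsGbwcCone (pos : Y → Prop) (T : Y → X) : Prop :=
  ∀ A : Set Y, TopBOrderBoundedCone Y pos A → RelWeaklyCompact X (T '' A)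

/-- Weakly compact operator: maps topologically bounded sets to relatively weakly
compact sets. -/
def IsWeaklyCompactOp (T : Y → X) : Prop :=
  ∀ A : Set Y, IsVonNBounded ℝ A → RelWeaklyCompact X (T '' A)

end ConeDefs

section OpDefs

variable (E : Type*) [AddCommGroup E] [Lattice E] [Module ℝ E] [TopologicalSpace E]
variable (X : Type*) [NormedAddCommGroup X] [NormedSpace ℝ X]

/-- Topologically b-order bounded subset of a locally convex-solid Riesz space:
order bounded as a subset of the strong bidual E''. -/
def TopBOrderBounded (A : Set E) : Prop :=
  TopBOrderBoundedCone E (fun x : E => 0 ≤ x) A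

/-- Generalized b-weakly compact operator: maps topologically b-order bounded sets to
relatively weakly compact sets. -/
def IsGbwc (T : E → X) : Prop :=
  ∀ A : Set E, TopBOrderBounded E A → RelWeaklyCompact X (T '' A)

/-- Order weakly compact operator: maps order bounded sets to relatively weakly compact
sets. -/
def IsOwc (T : E → X) : Prop :=
  ∀ A : Set E, (∃ u v : E, A ⊆ Set.Icc u v) → RelWeaklyCompact X (T '' A)

end OpDefs

section OrderTop

variable (E : Type*) [AddCommGroup E] [Lattice E] [Module ℝ E] [TopologicalSpace E]

/-- Dedekind completeness. -/
def DedekindComplete : Prop :=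
  ∀ A : Set E, A.Nonempty → BddAbove A → ∃ s, IsLUB A s

/-- The topology is a Lebesgue topology (resp. the norm is order continuous): every net
decreasing to zero in order converges topologically to zero. -/
def LebesgueTopology : Prop :=
  ∀ (ι : Type) [Preorder ι] [Nonempty ι] [IsDirected ι (· ≤ ·)] (x : ι → E),
    Antitone x → IsGLB (Set.range x) 0 → Tendsto x atTop (nhds (0 : E))

/-- The strong topology β(E',E) on the dual is a Lebesgue topology (with respect to the
dual-cone ordering on E'). -/
def DualLebesgue : Prop :=
  ∀ (ι : Type) [Preorder ι] [Nonempty ι] [IsDirected ι (· ≤ ·)] (f : ι → (E →L[ℝ] ℝ)),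
    (∀ i j : ι, i ≤ j → DualLE E (f j) (f i)) →
    (∀ i : ι, DualLE E 0 (f i)) →
    (∀ g : E →L[ℝ] ℝ, (∀ i : ι, DualLE E g (f i)) → DualLE E g 0) →
    Tendsto f atTop (nhds (0 : E →L[ℝ] ℝ))

/-- BOB-property: every topologically bounded increasing net of positive elements is
order bounded. -/
def BOBProperty : Prop :=
  ∀ (ι : Type) [Preorder ι] [Nonempty ι] [IsDirected ι (· ≤ ·)] (x : ι → E),
    Monotone x → (∀ i, 0 ≤ x i) → IsVonNBounded ℝ (Set.range x) → ∃ u : E, ∀ i, x i ≤ u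

/-- Levi property: every topologically bounded increasing net of positive elements has
a supremum. -/
def LeviProperty : Prop :=
  ∀ (ι : Type) [Preorder ι] [Nonempty ι] [IsDirected ι (· ≤ ·)] (x : ι → E),
    Monotone x → (∀ i, 0 ≤ x i) → IsVonNBounded ℝ (Set.range x) →
    ∃ s : E, IsLUB (Set.range x) s

/-- KR-space: every increasing, topologically bounded net of positive elements is
(topologically) convergent. -/
def IsKRSpace : Prop :=
  ∀ (ι : Type) [Preorder ι] [Nonempty ι] [IsDirected ι (· ≤ ·)] (x : ι → E),
    Monotone x → (∀ i, 0 ≤ x i) → IsVonNBounded ℝ (Set.range x) →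
    ∃ l : E, Tendsto x atTop (nhds l)

end OrderTop

section Bidual

variable (E : Type*) [AddCommGroup E] [Lattice E] [Module ℝ E] [TopologicalSpace E]
  [ContinuousSMul ℝ E]

/-- The canonical embedding of E into its strong bidual. -/
noncomputable def canonEmbed (x : E) : (E →L[ℝ] ℝ) →L[ℝ] ℝ :=
  { toFun := fun f => f x
    map_add' := fun _ _ => rfl
    map_smul' := fun _ _ => rfl
    cont := continuous_eval_const x }

/-- `|f| (x)` for `f ∈ E'` and `x ≥ 0`, via the Riesz–Kantorovich formula. -/
noncomputable def dualAbsApply (f : E →L[ℝ] ℝ) (x : E) : ℝ :=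
  sSup ((fun y : E => f y) '' {y : E | |y| ≤ x})

/-- `|ψ| (f)` for `ψ ∈ E''` and a positive `f ∈ E'`, via the Riesz–Kantorovich formula. -/
noncomputable def bidualAbsApply (ψ : (E →L[ℝ] ℝ) →L[ℝ] ℝ) (f : E →L[ℝ] ℝ) : ℝ :=
  sSup ((fun g : E →L[ℝ] ℝ => ψ g) ''
    {g : E →L[ℝ] ℝ | ∀ x : E, 0 ≤ x → dualAbsApply E g x ≤ f x})

/-- Least upper bound in the strong bidual with respect to the dual-cone ordering. -/
def BidualIsLUB (A : Set ((E →L[ℝ] ℝ) →L[ℝ] ℝ)) (ψ : (E →L[ℝ] ℝ) →L[ℝ] ℝ) : Prop :=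
  (∀ a ∈ A, BidualLE E a ψ) ∧ ∀ χ, (∀ a ∈ A, BidualLE E a χ) → BidualLE E ψ χ

/-- E is (under the canonical embedding) a band in its strong bidual E'': the image of E
is a solid subset of E'' (for the absolute values given by the Riesz–Kantorovich
formulas) which is closed under existing suprema. -/
def IsBandInBidual : Prop :=
  (∀ ψ φ : (E →L[ℝ] ℝ) →L[ℝ] ℝ, φ ∈ Set.range (canonEmbed E) →
      (∀ f : E →L[ℝ] ℝ, PosFunctional E f → bidualAbsApply E ψ f ≤ bidualAbsApply E φ f) →
      ψ ∈ Set.range (canonEmbed E)) ∧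
  (∀ A : Set ((E →L[ℝ] ℝ) →L[ℝ] ℝ), A ⊆ Set.range (canonEmbed E) →
      ∀ ψ, BidualIsLUB E A ψ → ψ ∈ Set.range (canonEmbed E))

/-- The entourages of the absolute weak topology |σ|(E,E'), generated by the Riesz
seminorms `x ↦ |f|(|x|)`, `f ∈ E'`. -/
noncomputable def absWeakEntourages : Filter (E × E) :=
  ⨅ (f : E →L[ℝ] ℝ) (ε : ℝ) (_ : 0 < ε),
    Filter.principal {p : E × E | dualAbsApply E f |p.1 - p.2| < ε}

/-- Completeness for the absolute weak topology |σ|(E,E'): every Cauchy filter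
converges. -/
noncomputable def AbsWeakComplete : Prop :=
  ∀ F : Filter E, F.NeBot → F ×ˢ F ≤ absWeakEntourages E →
    ∃ x : E, F ≤ (absWeakEntourages E).comap (Prod.mk x)

end Bidual

section SPIB

variable {E : Type*} [AddCommGroup E] [Lattice E] [Module ℝ E] [TopologicalSpace E]
variable {X : Type*} [NormedAddCommGroup X] [NormedSpace ℝ X]

/-- Sequential positive inverse boundedness property. -/
def HasSPIB (T : E → X) : Prop :=
  ∀ x : ℕ → E, (∀ n, 0 ≤ x n) →
    IsVonNBounded ℝ (Set.range fun n => T (x n)) → IsVonNBounded ℝ (Set.range x)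

end SPIB

section AuxWeak

open Topology NormedSpace

variable {X : Type*} [NormedAddCommGroup X] [NormedSpace ℝ X]

/-- The canonical embedding into the bidual is weak-weak inducing. -/
lemma aux_weak_inducing :
    IsInducing (WeakSpace.map (inclusionInDoubleDual ℝ X) :
      WeakSpace ℝ X → WeakSpace ℝ ((X →L[ℝ] ℝ) →L[ℝ] ℝ)) := by
  constructor
  have hX : (inferInstance : TopologicalSpace (WeakSpace ℝ X))
      = ⨅ f : X →L[ℝ] ℝ, TopologicalSpace.induced (fun x : X => f x) inferInstance :=
    induced_to_pi _
  have hX'' : (inferInstance :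
      TopologicalSpace (WeakSpace ℝ ((X →L[ℝ] ℝ) →L[ℝ] ℝ)))
      = ⨅ Λ : ((X →L[ℝ] ℝ) →L[ℝ] ℝ) →L[ℝ] ℝ,
          TopologicalSpace.induced (fun φ : (X →L[ℝ] ℝ) →L[ℝ] ℝ => Λ φ) inferInstance :=
    induced_to_pi _
  show (inferInstance : TopologicalSpace (WeakSpace ℝ X)) =
    TopologicalSpace.induced (fun x : X => NormedSpace.inclusionInDoubleDual ℝ X x)
      (inferInstance :
        TopologicalSpace (WeakSpace ℝ ((X →L[ℝ] ℝ) →L[ℝ] ℝ)))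
  rw [hX'', induced_iInf]
  refine hX.trans ?_
  simp only [induced_compose]
  apply le_antisymm
  · exact le_iInf fun Λ =>
      iInf_le_of_le (Λ.comp (inclusionInDoubleDual ℝ X)) (le_of_eq rfl)
  · exact le_iInf fun f =>
      iInf_le_of_le (inclusionInDoubleDual ℝ (X →L[ℝ] ℝ) f) (le_of_eq rfl)

/-- If the image of a set under the canonical embedding into the bidual is relatively
weakly compact in the bidual, then the set is relatively weakly compact. -/
lemma aux_relWeaklyCompact_of_bidual [CompleteSpace X] (S : Set X)
    (h : RelWeaklyCompact ((X →L[ℝ] ℝ) →L[ℝ] ℝ) ((inclusionInDoubleDual ℝ X) '' S)) :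
    RelWeaklyCompact X S := by
  set J : X →L[ℝ] ((X →L[ℝ] ℝ) →L[ℝ] ℝ) := inclusionInDoubleDual ℝ X with hJ
  set Jw : WeakSpace ℝ X → WeakSpace ℝ ((X →L[ℝ] ℝ) →L[ℝ] ℝ) := ⇑(WeakSpace.map J) with hJw
  have hind : IsInducing Jw := aux_weak_inducing
  -- the range of J is norm-closed and convex
  have hconv : Convex ℝ (Set.range J) := by
    have h0 : Convex ℝ ((J.toLinearMap : X →ₗ[ℝ] ((X →L[ℝ] ℝ) →L[ℝ] ℝ)) '' Set.univ) :=
      convex_univ.linear_image _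
    simpa [Set.image_univ] using h0
  have hclosed : IsClosed (Set.range J) := by
    have : Isometry (⇑J) := (inclusionInDoubleDualLi ℝ (E := X)).isometry
    exact this.isClosedEmbedding.isClosed_range
  -- hence its image in the weak space is weakly closed
  have hwclosed : IsClosed
      ((toWeakSpace ℝ ((X →L[ℝ] ℝ) →L[ℝ] ℝ)) '' (Set.range J)) := by
    rw [← closure_eq_iff_isClosed, ← Convex.toWeakSpace_closure ℝ (E := (X →L[ℝ] ℝ) →L[ℝ] ℝ) hconv, hclosed.closure_eq]
  set K : Set (WeakSpace ℝ ((X →L[ℝ] ℝ) →L[ℝ] ℝ)) :=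
    closure ((toWeakSpace ℝ ((X →L[ℝ] ℝ) →L[ℝ] ℝ)) '' (J '' S)) with hK
  have hKc : IsCompact K := h
  have himg : ∀ x : X, (toWeakSpace ℝ ((X →L[ℝ] ℝ) →L[ℝ] ℝ)) (J x)
      = Jw ((toWeakSpace ℝ X) x) := fun x => rfl
  have hKrange : K ⊆ Set.range Jw := by
    have h1 : (toWeakSpace ℝ ((X →L[ℝ] ℝ) →L[ℝ] ℝ)) '' (J '' S)
        ⊆ (toWeakSpace ℝ ((X →L[ℝ] ℝ) →L[ℝ] ℝ)) '' (Set.range J) :=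
      Set.image_mono (Set.image_subset_range _ _)
    refine (closure_minimal h1 hwclosed).trans ?_
    rintro - ⟨-, ⟨x, rfl⟩, rfl⟩
    exact ⟨(toWeakSpace ℝ X) x, (himg x).symm⟩
  have hs : IsCompact (Jw ⁻¹' K) := hind.isCompact_preimage' hKc hKrange
  refine hs.of_isClosed_subset isClosed_closure ?_
  refine closure_minimal ?_ (isClosed_closure.preimage hind.continuous)
  rintro - ⟨x, hx, rfl⟩
  show Jw ((toWeakSpace ℝ X) x) ∈ K
  rw [← himg x]
  exact subset_closure ⟨J x, ⟨x, hx, rfl⟩, rfl⟩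

end AuxWeak

/-- If the second adjoint T'' : E'' → X'' of an operator T : E → X is order
weakly compact, then T is gbwc (hence owc). -/
theorem gbwc_of_secondAdjoint_owc
    {E : Type*} [AddCommGroup E] [Lattice E] [Module ℝ E]
    [CovariantClass E E (· + ·) (· ≤ ·)] [PosSMulMono ℝ E]
    [TopologicalSpace E] [IsTopologicalAddGroup E] [ContinuousSMul ℝ E] [T2Space E]
    (hE : IsLocallyConvexSolid E)
    {X : Type*} [NormedAddCommGroup X] [NormedSpace ℝ X] [CompleteSpace X]
    (T : E →L[ℝ] X)
    (T₂ : ((E →L[ℝ] ℝ) →L[ℝ] ℝ) → ((X →L[ℝ] ℝ) →L[ℝ] ℝ))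
    (hT₂ : ∀ (φ : (E →L[ℝ] ℝ) →L[ℝ] ℝ) (g : X →L[ℝ] ℝ), T₂ φ g = φ (g.comp T))
    (howc : ∀ A : Set ((E →L[ℝ] ℝ) →L[ℝ] ℝ),
      (∃ u v : (E →L[ℝ] ℝ) →L[ℝ] ℝ, ∀ a ∈ A, BidualLE E u a ∧ BidualLE E a v) →
      RelWeaklyCompact ((X →L[ℝ] ℝ) →L[ℝ] ℝ) (T₂ '' A)) :
    IsGbwc E X ⇑T ∧ IsOwc E X ⇑T := by
  have hg : IsGbwc E X ⇑T := by
    intro A hA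
    obtain ⟨φ, ψ, hbound⟩ := hA
    have h1 : RelWeaklyCompact ((X →L[ℝ] ℝ) →L[ℝ] ℝ) (T₂ '' (canonEmbed E '' A)) := by
      refine howc _ ⟨φ, ψ, ?_⟩
      rintro - ⟨x, hx, rfl⟩
      exact ⟨fun f hf => (hbound x hx f hf).1, fun f hf => (hbound x hx f hf).2⟩
    have h2 : T₂ '' (canonEmbed E '' A)
        = (NormedSpace.inclusionInDoubleDual ℝ X) '' (⇑T '' A) := by
      rw [Set.image_image, Set.image_image]
      refine Set.image_congr fun x _ => ?_
      refine ContinuousLinearMap.ext fun g => ?_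
      rw [hT₂]
      rfl
    rw [h2] at h1
    exact aux_relWeaklyCompact_of_bidual _ h1
  refine ⟨hg, fun A hA => hg A ?_⟩
  obtain ⟨u, v, hA⟩ := hA
  refine ⟨canonEmbed E u, canonEmbed E v, fun a ha f hf => ?_⟩
  obtain ⟨h1, h2⟩ := hA ha
  constructor
  · have := hf _ (sub_nonneg.mpr h1)
    have heq : f (a - u) = f a - f u := map_sub f a u
    show f u ≤ f a
    linarith [heq ▸ this]
  · have := hf _ (sub_nonneg.mpr h2)
    have heq : f (v - a) = f v - f a := map_sub f v a
    show f a ≤ f v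
    linarith [heq ▸ this]
end

section
/- Let E be a locally convex-solid Riesz space and X a Banach space, and let T : E → X be an operator. If the second adjoint T′′ : E′′ → X′′ is generalized b-weakly compact, then so is T. -/
open Filter Topology Set Bornology

section AuxGbwc

open NormedSpace

/-- Evaluation embedding of a topological vector space into its double dual
(no lattice structure needed). -/
noncomputable def evalAtCLM {Y : Type*} [AddCommGroup Y] [Module ℝ Y] [TopologicalSpace Y]
    [ContinuousSMul ℝ Y] (x : Y) : (Y →L[ℝ] ℝ) →L[ℝ] ℝ :=
  { toFun := fun f => f x
    map_add' := fun _ _ => rfl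
    map_smul' := fun _ _ => rfl
    cont := continuous_eval_const x }

/-- If the image of a set under the canonical embedding into the double dual of a Banach
space is relatively weakly compact, then so is the set itself. -/
theorem relWeaklyCompact_of_bidual (X : Type*) [NormedAddCommGroup X] [NormedSpace ℝ X]
    [CompleteSpace X] {B : Set X}
    (h : RelWeaklyCompact ((X →L[ℝ] ℝ) →L[ℝ] ℝ) (inclusionInDoubleDual ℝ X '' B)) :
    RelWeaklyCompact X B := by
  classical
  set J := inclusionInDoubleDual ℝ X with hJ
  set j := (WeakSpace.map J :
      WeakSpace ℝ X →L[ℝ] WeakSpace ℝ ((X →L[ℝ] ℝ) →L[ℝ] ℝ)) with hj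
  have t1eq : (inferInstance : TopologicalSpace (WeakSpace ℝ X))
      = TopologicalSpace.induced
          (fun (x : WeakSpace ℝ X) (f : X →L[ℝ] ℝ) => f x) Pi.topologicalSpace := rfl
  have hind : Topology.IsInducing ⇑j := by
    constructor
    apply le_antisymm (continuous_iff_le_induced.mp j.continuous)
    have h1 : TopologicalSpace.induced (⇑j)
        (inferInstance : TopologicalSpace (WeakSpace ℝ ((X →L[ℝ] ℝ) →L[ℝ] ℝ)))
        = TopologicalSpace.induced
          ((fun (ψ : WeakSpace ℝ ((X →L[ℝ] ℝ) →L[ℝ] ℝ))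
            (Λ : ((X →L[ℝ] ℝ) →L[ℝ] ℝ) →L[ℝ] ℝ) => Λ ψ) ∘ ⇑j) Pi.topologicalSpace :=
      induced_compose (f := ⇑j)
        (g := fun (ψ : WeakSpace ℝ ((X →L[ℝ] ℝ) →L[ℝ] ℝ))
          (Λ : ((X →L[ℝ] ℝ) →L[ℝ] ℝ) →L[ℝ] ℝ) => Λ ψ)
        (tγ := Pi.topologicalSpace)
    have hr : Continuous (fun g : ((((X →L[ℝ] ℝ) →L[ℝ] ℝ) →L[ℝ] ℝ) → ℝ) =>
        fun f : X →L[ℝ] ℝ => g (inclusionInDoubleDual ℝ (X →L[ℝ] ℝ) f)) :=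
      continuous_pi fun f => continuous_apply _
    have h2 : TopologicalSpace.induced
          ((fun (ψ : WeakSpace ℝ ((X →L[ℝ] ℝ) →L[ℝ] ℝ))
            (Λ : ((X →L[ℝ] ℝ) →L[ℝ] ℝ) →L[ℝ] ℝ) => Λ ψ) ∘ ⇑j) Pi.topologicalSpace
        ≤ TopologicalSpace.induced
            (fun (x : WeakSpace ℝ X) (f : X →L[ℝ] ℝ) => f x) Pi.topologicalSpace :=
      le_trans (induced_mono (continuous_iff_le_induced.mp hr)) (le_of_eq induced_compose)
    exact le_trans (le_of_eq h1) (le_trans h2 (le_of_eq t1eq.symm))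
  have hinj : Function.Injective ⇑j := fun a b hab =>
    (inclusionInDoubleDualLi ℝ (E := X)).injective hab
  have hcl0 : IsClosed (Set.range ⇑J : Set ((X →L[ℝ] ℝ) →L[ℝ] ℝ)) := by
    have hiso : Isometry (⇑(inclusionInDoubleDualLi ℝ (E := X))) :=
      (inclusionInDoubleDualLi ℝ (E := X)).isometry
    have h' := hiso.isClosedEmbedding.isClosed_range
    exact h'
  have hconv : Convex ℝ (Set.range ⇑J : Set ((X →L[ℝ] ℝ) →L[ℝ] ℝ)) := by
    have h1 := (LinearMap.range (J : X →ₗ[ℝ] ((X →L[ℝ] ℝ) →L[ℝ] ℝ))).convex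
    rwa [LinearMap.coe_range] at h1
  have hrange : IsClosed (Set.range ⇑j) := by
    have him : Set.range ⇑j
        = ⇑(toWeakSpace ℝ ((X →L[ℝ] ℝ) →L[ℝ] ℝ)) '' (Set.range ⇑J) := by
      ext ψ
      constructor
      · rintro ⟨x, rfl⟩; exact ⟨J x, ⟨x, rfl⟩, rfl⟩
      · rintro ⟨_, ⟨x, rfl⟩, rfl⟩; exact ⟨x, rfl⟩
    rw [him]
    have hc : closure (⇑(toWeakSpace ℝ ((X →L[ℝ] ℝ) →L[ℝ] ℝ)) '' (Set.range ⇑J))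
        = ⇑(toWeakSpace ℝ ((X →L[ℝ] ℝ) →L[ℝ] ℝ)) '' (Set.range ⇑J) := by
      rw [← Convex.toWeakSpace_closure ℝ (E := (X →L[ℝ] ℝ) →L[ℝ] ℝ) hconv, hcl0.closure_eq]
    exact closure_eq_iff_isClosed.mp hc
  have hce : Topology.IsClosedEmbedding ⇑j := ⟨⟨hind, hinj⟩, hrange⟩
  unfold RelWeaklyCompact at h ⊢
  have him2 : ⇑(toWeakSpace ℝ ((X →L[ℝ] ℝ) →L[ℝ] ℝ)) '' (⇑J '' B)
      = ⇑j '' (⇑(toWeakSpace ℝ X) '' B) := by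
    ext ψ; constructor
    · rintro ⟨_, ⟨x, hx, rfl⟩, rfl⟩; exact ⟨toWeakSpace ℝ X x, ⟨x, hx, rfl⟩, rfl⟩
    · rintro ⟨_, ⟨x, hx, rfl⟩, rfl⟩; exact ⟨J x, ⟨x, hx, rfl⟩, rfl⟩
  rw [him2, hce.closure_image_eq] at h
  exact (Topology.IsEmbedding.isCompact_iff ⟨hind, hinj⟩).mpr h

end AuxGbwc

/-- If the second adjoint T'' : E'' → X'' of an operator T : E → X is gbwc,
then so is T. -/
theorem gbwc_of_secondAdjoint_gbwc
    {E : Type*} [AddCommGroup E] [Lattice E] [Module ℝ E]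
    [CovariantClass E E (· + ·) (· ≤ ·)] [PosSMulMono ℝ E]
    [TopologicalSpace E] [IsTopologicalAddGroup E] [ContinuousSMul ℝ E] [T2Space E]
    (hE : IsLocallyConvexSolid E)
    {X : Type*} [NormedAddCommGroup X] [NormedSpace ℝ X] [CompleteSpace X]
    (T : E →L[ℝ] X)
    (T₂ : ((E →L[ℝ] ℝ) →L[ℝ] ℝ) → ((X →L[ℝ] ℝ) →L[ℝ] ℝ))
    (hT₂ : ∀ (φ : (E →L[ℝ] ℝ) →L[ℝ] ℝ) (g : X →L[ℝ] ℝ), T₂ φ g = φ (g.comp T))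
    (hgbwc : IsGbwcCone ((E →L[ℝ] ℝ) →L[ℝ] ℝ) ((X →L[ℝ] ℝ) →L[ℝ] ℝ)
      (fun ψ => BidualLE E 0 ψ) T₂) :
    IsGbwc E X ⇑T := by
  intro A hA
  obtain ⟨φ, ψ₀, hφψ⟩ := hA
  have hbb : TopBOrderBoundedCone ((E →L[ℝ] ℝ) →L[ℝ] ℝ)
      (fun ψ' => BidualLE E 0 ψ') (canonEmbed E '' A) := by
    refine ⟨evalAtCLM φ, evalAtCLM ψ₀, ?_⟩
    rintro _ ⟨a, ha, rfl⟩ F hF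
    have hlo : BidualLE E 0 (canonEmbed E a - φ) := by
      intro f hf
      have h0 := (hφψ a ha f hf).1
      simp only [ContinuousLinearMap.zero_apply, ContinuousLinearMap.sub_apply]
      have hce : canonEmbed E a f = f a := rfl
      linarith
    have hhi : BidualLE E 0 (ψ₀ - canonEmbed E a) := by
      intro f hf
      have h0 := (hφψ a ha f hf).2
      simp only [ContinuousLinearMap.zero_apply, ContinuousLinearMap.sub_apply]
      have hce : canonEmbed E a f = f a := rfl
      linarith
    have h1 : 0 ≤ F (canonEmbed E a - φ) := hF _ hlo
    have h2 : 0 ≤ F (ψ₀ - canonEmbed E a) := hF _ hhi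
    rw [map_sub F] at h1 h2
    constructor
    · have he : evalAtCLM φ F = F φ := rfl
      linarith
    · have he : evalAtCLM ψ₀ F = F ψ₀ := rfl
      linarith
  have h2 := hgbwc _ hbb
  have himg : T₂ '' (canonEmbed E '' A)
      = ⇑(NormedSpace.inclusionInDoubleDual ℝ X) '' (⇑T '' A) := by
    ext χ
    constructor
    · rintro ⟨_, ⟨a, ha, rfl⟩, rfl⟩
      refine ⟨T a, ⟨a, ha, rfl⟩, ?_⟩
      ext g
      rw [hT₂]
      rfl
    · rintro ⟨_, ⟨a, ha, rfl⟩, rfl⟩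
      refine ⟨canonEmbed E a, ⟨a, ha, rfl⟩, ?_⟩
      ext g
      rw [hT₂]
      rfl
  rw [himg] at h2
  exact relWeaklyCompact_of_bidual X h2
end

section
/- Let T : E → X be a generalized b-weakly compact operator from a locally convex-solid Riesz space into a Banach space. Then for every increasing, topologically bounded sequence (x_n) of positive elements of E, the sequence (T x_n) is norm convergent in X. -/
open Filter Topology Set Bornology

set_option maxHeartbeats 2000000

section AuxGbwc


noncomputable def ulimR (U : Ultrafilter ℕ) (u : ℕ → ℝ) : ℝ := limUnder (U : Filter ℕ) u

lemma tendsto_ulimR (U : Ultrafilter ℕ) {u : ℕ → ℝ} {C : ℝ} (h : ∀ n, |u n| ≤ C) :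
    Tendsto u (U : Filter ℕ) (𝓝 (ulimR U u)) := by
  apply tendsto_nhds_limUnder
  have hle : (U.map u : Filter ℝ) ≤ 𝓟 (Set.Icc (-C) C) :=
    Filter.le_principal_iff.2 (Filter.mem_map.2 (Filter.univ_mem' fun n =>
      Set.mem_Icc.2 (abs_le.1 (h n))))
  obtain ⟨a, -, ha⟩ := isCompact_Icc.ultrafilter_le_nhds (U.map u) (by exact_mod_cast hle)
  exact ⟨a, ha⟩

section X
variable {X : Type*} [NormedAddCommGroup X] [NormedSpace ℝ X]

private lemma bnd {g : ℕ → X →L[ℝ] ℝ} {C : ℝ} (hC : ∀ k, ‖g k‖ ≤ C) (v : X) (n : ℕ) :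
    |g n v| ≤ C * ‖v‖ :=
  ((g n).le_opNorm v).trans (mul_le_mul_of_nonneg_right (hC n) (norm_nonneg v))

noncomputable def ulimCLM (U : Ultrafilter ℕ) (g : ℕ → X →L[ℝ] ℝ) {C : ℝ}
    (hC : ∀ k, ‖g k‖ ≤ C) : X →L[ℝ] ℝ :=
  LinearMap.mkContinuous
    { toFun := fun v => ulimR U (fun k => g k v)
      map_add' := fun v w =>
        tendsto_nhds_unique (tendsto_ulimR U (bnd hC (v + w)))
          (((tendsto_ulimR U (bnd hC v)).add (tendsto_ulimR U (bnd hC w))).congr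
            (fun k => (map_add (g k) v w).symm))
      map_smul' := fun c v => by
        refine tendsto_nhds_unique (tendsto_ulimR U (bnd hC (c • v)))
          (((tendsto_ulimR U (bnd hC v)).const_mul c).congr (fun k => ?_))
        rw [map_smul]; simp
    } C
    (fun v => by
      have : |ulimR U (fun k => g k v)| ≤ C * ‖v‖ :=
        le_of_tendsto (tendsto_ulimR U (bnd hC v)).abs
          (Filter.Eventually.of_forall fun n => bnd hC v n)
      simpa using this)

lemma ulimCLM_tendsto (U : Ultrafilter ℕ) (g : ℕ → X →L[ℝ] ℝ) {C : ℝ}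
    (hC : ∀ k, ‖g k‖ ≤ C) (v : X) :
    Tendsto (fun k => g k v) (U : Filter ℕ) (𝓝 (ulimCLM U g hC v)) :=
  tendsto_ulimR U (bnd hC v)

lemma ulimCLM_norm_le (U : Ultrafilter ℕ) (g : ℕ → X →L[ℝ] ℝ) {C : ℝ} (hC0 : 0 ≤ C)
    (hC : ∀ k, ‖g k‖ ≤ C) : ‖ulimCLM U g hC‖ ≤ C :=
  LinearMap.mkContinuous_norm_le _ hC0 _

end X

section X2
variable {X : Type*} [NormedAddCommGroup X] [NormedSpace ℝ X]

lemma eval_weak_continuous (g : X →L[ℝ] ℝ) :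
    Continuous fun w : WeakSpace ℝ X => g ((toWeakSpace ℝ X).symm w) :=
  WeakBilin.eval_continuous ((topDualPairing ℝ X).flip) g

lemma exists_weak_lim {P : Set X} (hW : IsCompact (closure ((toWeakSpace ℝ X) '' P)))
    (U : Ultrafilter ℕ) (u : ℕ → X) (hu : ∀ n, u n ∈ P) :
    ∃ w : X, ∀ g : X →L[ℝ] ℝ, Tendsto (fun n => g (u n)) (U : Filter ℕ) (𝓝 (g w)) := by
  have hle : (U.map (fun n => toWeakSpace ℝ X (u n)) : Filter (WeakSpace ℝ X)) ≤
      𝓟 (closure ((toWeakSpace ℝ X) '' P)) :=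
    Filter.le_principal_iff.2 (Filter.mem_map.2 (Filter.univ_mem' fun n =>
      subset_closure (Set.mem_image_of_mem _ (hu n))))
  obtain ⟨w', -, hw'⟩ := hW.ultrafilter_le_nhds _ (by exact_mod_cast hle)
  refine ⟨(toWeakSpace ℝ X).symm w', fun g => ?_⟩
  have hcont := eval_weak_continuous (X := X) g
  have := (hcont.tendsto w').comp hw'
  simpa [Function.comp_def] using this

lemma exists_weak_bound {P : Set X} (hW : IsCompact (closure ((toWeakSpace ℝ X) '' P)))
    (g : X →L[ℝ] ℝ) : ∃ C : ℝ, ∀ b ∈ P, |g b| ≤ C := by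
  obtain ⟨C, hC⟩ := hW.exists_bound_of_continuousOn
    ((eval_weak_continuous (X := X) g).continuousOn)
  refine ⟨C, fun b hb => ?_⟩
  have := hC _ (subset_closure (Set.mem_image_of_mem _ hb))
  simpa using this

end X2
section X4
variable {X : Type*} [NormedAddCommGroup X] [NormedSpace ℝ X]

lemma banach_core (y : ℕ → X) (P : Set X)
    (hP : ∀ F : Finset ℕ, (∑ k ∈ F, y k) ∈ P)
    (hW : IsCompact (closure ((toWeakSpace ℝ X) '' P)))
    {ε : ℝ} (hε : 0 < ε) (hy : ∀ k, ε ≤ ‖y k‖) : False := by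
  classical
  have habs : ∀ g : X →L[ℝ] ℝ, Summable (fun k => |g (y k)|) := by
    intro g
    obtain ⟨C, hC⟩ := exists_weak_bound hW g
    apply summable_of_sum_range_le (c := C + C) (fun n => abs_nonneg _)
    intro n
    have hsplit : ∑ i ∈ Finset.range n, |g (y i)|
        = (∑ i ∈ (Finset.range n).filter (fun i => 0 ≤ g (y i)), g (y i))
          + ∑ i ∈ (Finset.range n).filter (fun i => ¬ 0 ≤ g (y i)), (- g (y i)) := by
      rw [← Finset.sum_filter_add_sum_filter_not (Finset.range n) (fun i => 0 ≤ g (y i))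
        (fun i => |g (y i)|)]
      congr 1
      · exact Finset.sum_congr rfl fun i hi => abs_of_nonneg (Finset.mem_filter.1 hi).2
      · exact Finset.sum_congr rfl fun i hi =>
          abs_of_neg (lt_of_not_ge (Finset.mem_filter.1 hi).2)
    have h1 : (∑ i ∈ (Finset.range n).filter (fun i => 0 ≤ g (y i)), g (y i)) ≤ C := by
      rw [← map_sum]
      exact (abs_le.1 (hC _ (hP _))).2
    have h2 : (∑ i ∈ (Finset.range n).filter (fun i => ¬ 0 ≤ g (y i)), (- g (y i))) ≤ C := by
      have hx : -C ≤ ∑ i ∈ (Finset.range n).filter (fun i => ¬ 0 ≤ g (y i)), g (y i) := by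
        rw [← map_sum]
        exact (abs_le.1 (hC _ (hP _))).1
      have hy2 : (∑ i ∈ (Finset.range n).filter (fun i => ¬ 0 ≤ g (y i)), (- g (y i)))
          = - ∑ i ∈ (Finset.range n).filter (fun i => ¬ 0 ≤ g (y i)), g (y i) := by
        simp
      rw [hy2]; linarith
    rw [hsplit]; linarith
  have hGex : ∀ k, ∃ g : X →L[ℝ] ℝ, ‖g‖ = 1 ∧ g (y k) = ‖y k‖ := by
    intro k
    have hne : y k ≠ 0 := by
      intro h
      have := hy k
      rw [h, norm_zero] at this
      linarith
    obtain ⟨g, h1, h2⟩ := exists_dual_vector ℝ (y k) (norm_ne_zero_iff.2 hne)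
    exact ⟨g, h1, by exact_mod_cast h2⟩
  choose G hG1 hG2 using hGex
  set U : Ultrafilter ℕ := Ultrafilter.of atTop with hU
  have hUle : (U : Filter ℕ) ≤ atTop := Ultrafilter.of_le _
  have hG1' : ∀ k, ‖G k‖ ≤ 1 := fun k => le_of_eq (hG1 k)
  set gbar : X →L[ℝ] ℝ := ulimCLM U G hG1' with hgbar
  have hgbar_tendsto : ∀ v, Tendsto (fun k => G k v) (U : Filter ℕ) (𝓝 (gbar v)) :=
    fun v => ulimCLM_tendsto U G hG1' v
  have hgbar_norm : ‖gbar‖ ≤ 1 := ulimCLM_norm_le U G zero_le_one hG1'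
  set δ : ℝ := ε/8 with hδ
  have hδpos : 0 < δ := by positivity
  obtain ⟨k, hkP, hkr⟩ := exists_seq_of_forall_finset_exists
    (fun b => |gbar (y b)| ≤ ε/4)
    (fun a b => a < b ∧ |(G b - gbar) (y a)| ≤ δ * (1/2)^a ∧
      (∑' j, |(G a - gbar) (y (j + b))|) ≤ δ)
    (by
      intro s hs
      have E1 : ∀ᶠ b in (U : Filter ℕ), ∀ a ∈ s, a < b :=
        hUle ((eventually_all_finset s).2 fun a _ => eventually_gt_atTop a)
      have E2 : ∀ᶠ b in (U : Filter ℕ), |gbar (y b)| ≤ ε/4 :=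
        hUle (((habs gbar).tendsto_atTop_zero.eventually_lt_const
          (by positivity)).mono fun b hb => le_of_lt hb)
      have E3 : ∀ᶠ b in (U : Filter ℕ), ∀ a ∈ s, |(G b - gbar) (y a)| ≤ δ * (1/2)^a := by
        rw [eventually_all_finset]
        intro a _
        have h0 : Tendsto (fun b => G b (y a) - gbar (y a)) (U : Filter ℕ) (𝓝 0) := by
          simpa using (hgbar_tendsto (y a)).sub_const (gbar (y a))
        have h1 : Tendsto (fun b => |G b (y a) - gbar (y a)|) (U : Filter ℕ) (𝓝 0) := by
          simpa using h0.abs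
        refine (h1.eventually_lt_const (u := δ * (1/2)^a) (by positivity)).mono fun b hb => ?_
        rw [ContinuousLinearMap.sub_apply]
        exact le_of_lt hb
      have E4 : ∀ᶠ b in (U : Filter ℕ), ∀ a ∈ s,
          (∑' j, |(G a - gbar) (y (j + b))|) ≤ δ := by
        rw [eventually_all_finset]
        intro a _
        exact hUle (((tendsto_sum_nat_add fun j => |(G a - gbar) (y j)|).eventually_lt_const
          hδpos).mono fun b hb => le_of_lt hb)
      obtain ⟨b, hb1, hb2, hb3, hb4⟩ := (E1.and (E2.and (E3.and E4))).exists
      exact ⟨b, hb2, fun a ha => ⟨hb1 a ha, hb3 a ha, hb4 a ha⟩⟩)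
  have hkmono : StrictMono k := fun a b h => (hkr a b h).1
  set φ : ℕ → X →L[ℝ] ℝ := fun i => G (k i) - gbar with hφ
  have hφnorm : ∀ i, ‖φ i‖ ≤ 2 := by
    intro i
    have h := norm_sub_le (G (k i)) gbar
    rw [hG1 (k i)] at h
    calc ‖φ i‖ ≤ 1 + ‖gbar‖ := h
    _ ≤ 2 := by linarith
  set ghat : X →L[ℝ] ℝ := ulimCLM U φ (C := 2) hφnorm with hghat
  have hwm : ∀ m : ℕ, ∃ w : X, ∀ g' : X →L[ℝ] ℝ,
      g' w = ∑' j, g' (y (k (j + (m+1)))) := by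
    intro m
    obtain ⟨w, hw⟩ := exists_weak_lim hW U
      (fun R => ∑ j ∈ (Finset.Ico (m+1) (m+1+R)).image k, y j)
      (fun R => hP _)
    refine ⟨w, fun g' => ?_⟩
    have hsumk : Summable (fun l => g' (y (k l))) := by
      have := (habs g').comp_injective hkmono.injective
      exact Summable.of_abs (by simpa [Function.comp_def] using this)
    have hsum2 : Summable (fun j => g' (y (k (j + (m+1))))) :=
      (summable_nat_add_iff (m+1)).2 hsumk
    have htend : Tendsto (fun R => ∑ j ∈ Finset.range R, g' (y (k (j + (m+1)))))
        atTop (𝓝 (∑' j, g' (y (k (j + (m+1)))))) := hsum2.hasSum.tendsto_sum_nat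
    have hcongr : ∀ R, g' (∑ j ∈ (Finset.Ico (m+1) (m+1+R)).image k, y j)
        = ∑ j ∈ Finset.range R, g' (y (k (j + (m+1)))) := by
      intro R
      rw [map_sum, Finset.sum_image (fun a _ b _ h => hkmono.injective h),
        Finset.sum_Ico_eq_sum_range]
      simp only [Nat.add_sub_cancel_left]
      exact Finset.sum_congr rfl fun j _ => by rw [add_comm (m+1) j]
    exact tendsto_nhds_unique ((hw g').congr hcongr) (htend.mono_left hUle)
  choose w hw using hwm
  have hkey : ∀ m i, m < i → 3*ε/8 ≤ φ i (w m) := by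
    intro m i hmi
    set b : ℕ → ℝ := fun j => φ i (y (k (j + (m+1)))) with hb
    have hq : Summable (fun l => |φ i (y (k l))|) := by
      have := (habs (φ i)).comp_injective hkmono.injective
      simpa [Function.comp_def] using this
    have hsumabs : Summable (fun j => |b j|) := (summable_nat_add_iff (m+1)).2 hq
    have hsumb : Summable b := Summable.of_abs hsumabs
    set j0 : ℕ := i - (m+1) with hj0
    have hj0e : j0 + (m+1) = i := Nat.sub_add_cancel hmi
    have hsplit := Summable.tsum_eq_add_tsum_ite hsumb j0
    have hdiag : ε - ε/4 ≤ b j0 := by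
      have hbj0 : b j0 = G (k i) (y (k i)) - gbar (y (k i)) := by
        simp only [hb, hj0e, hφ, ContinuousLinearMap.sub_apply]
      rw [hbj0, hG2 (k i)]
      have h1 := abs_le.1 (hkP i)
      have h2 := hy (k i)
      linarith [h1.2]
    have hoff : (∑' j, |if j = j0 then 0 else b j|) ≤ 3*δ := by
      have hsum_ite : Summable (fun j => |if j = j0 then 0 else b j|) := by
        apply Summable.of_nonneg_of_le (fun j => abs_nonneg _) (fun j => ?_) hsumabs
        by_cases h : j = j0 <;> simp [h, abs_nonneg]
      apply Summable.tsum_le_of_sum_le hsum_ite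
      intro F
      have hzero : ∀ j ∈ F, j = j0 → |if j = j0 then 0 else b j| = 0 := by
        intro j _ hj; simp [hj]
      have hF1 : ∑ j ∈ F, |if j = j0 then 0 else b j|
          = ∑ j ∈ F.erase j0, |b j| := by
        rw [← Finset.sum_erase F (a := j0) (by simp)]
        exact Finset.sum_congr rfl fun j hj => by
          simp [Finset.mem_erase.1 hj |>.1]
      rw [hF1]
      have hsplit2 : ∑ j ∈ F.erase j0, |b j| =
          (∑ j ∈ (F.erase j0).filter (fun j => j + (m+1) < i), |b j|)
          + ∑ j ∈ (F.erase j0).filter (fun j => ¬ (j + (m+1) < i)), |b j| :=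
        (Finset.sum_filter_add_sum_filter_not _ _ _).symm
      have hfront : (∑ j ∈ (F.erase j0).filter (fun j => j + (m+1) < i), |b j|)
          ≤ δ * 2 := by
        have hterm : ∀ j ∈ (F.erase j0).filter (fun j => j + (m+1) < i),
            |b j| ≤ δ * (1/2)^j := by
          intro j hj
          have hlt : j + (m+1) < i := (Finset.mem_filter.1 hj).2
          have hr := (hkr (j + (m+1)) i hlt).2.1
          refine hr.trans ?_
          have hle : j ≤ k (j + (m+1)) :=
            le_trans (Nat.le_add_right _ _) hkmono.le_apply
          have : ((1:ℝ)/2) ^ (k (j + (m+1))) ≤ (1/2)^j :=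
            pow_le_pow_of_le_one (by norm_num) (by norm_num) hle
          exact mul_le_mul_of_nonneg_left this (le_of_lt hδpos)
        calc (∑ j ∈ (F.erase j0).filter (fun j => j + (m+1) < i), |b j|)
            ≤ ∑ j ∈ (F.erase j0).filter (fun j => j + (m+1) < i), δ * (1/2)^j :=
              Finset.sum_le_sum hterm
          _ = δ * ∑ j ∈ (F.erase j0).filter (fun j => j + (m+1) < i), ((1:ℝ)/2)^j := by
              rw [Finset.mul_sum]
          _ ≤ δ * 2 := by
              refine mul_le_mul_of_nonneg_left ?_ (le_of_lt hδpos)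
              exact le_trans (Summable.sum_le_tsum _ (fun j _ => by positivity)
                summable_geometric_two) (le_of_eq tsum_geometric_two)
      have htail : (∑ j ∈ (F.erase j0).filter (fun j => ¬ (j + (m+1) < i)), |b j|)
          ≤ δ := by
        set Fg := (F.erase j0).filter (fun j => ¬ (j + (m+1) < i)) with hFg
        have hge : ∀ j ∈ Fg, k (i+1) ≤ k (j + (m+1)) := by
          intro j hj
          have h1 : j ≠ j0 := (Finset.mem_erase.1 (Finset.mem_filter.1 hj).1).1
          have h2 : ¬ (j + (m+1) < i) := (Finset.mem_filter.1 hj).2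
          have h3 : j + (m+1) ≠ i := fun h => h1 (by omega)
          have : i + 1 ≤ j + (m+1) := by omega
          exact hkmono.monotone this
        have hsumtail : Summable (fun t => |φ i (y (t + k (i+1)))|) :=
          (summable_nat_add_iff (k (i+1))).2 (habs (φ i))
        have hinj : ∀ j1 ∈ Fg, ∀ j2 ∈ Fg,
            k (j1 + (m+1)) - k (i+1) = k (j2 + (m+1)) - k (i+1) → j1 = j2 := by
          intro j1 h1 j2 h2 he
          have g1 := hge j1 h1
          have g2 := hge j2 h2
          have : k (j1 + (m+1)) = k (j2 + (m+1)) := by omega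
          have := hkmono.injective this
          omega
        have hrw : ∑ j ∈ Fg, |b j|
            = ∑ t ∈ Fg.image (fun j => k (j + (m+1)) - k (i+1)),
                |φ i (y (t + k (i+1)))| := by
          rw [Finset.sum_image hinj]
          refine Finset.sum_congr rfl fun j hj => ?_
          have h5 : k (j + (m+1)) - k (i+1) + k (i+1) = k (j + (m+1)) :=
            Nat.sub_add_cancel (hge j hj)
          rw [h5, hb]
        rw [hrw]
        refine le_trans (Summable.sum_le_tsum _ (fun t _ => abs_nonneg _) hsumtail) ?_
        exact (hkr i (i+1) (Nat.lt_succ_self i)).2.2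
      rw [hsplit2]
      have : (3:ℝ)*δ = δ * 2 + δ := by ring
      rw [this]
      exact add_le_add hfront htail
    have hrem : |∑' j, if j = j0 then 0 else b j| ≤ 3*δ := by
      have hsum_ite2 : Summable (fun j => |if j = j0 then 0 else b j|) := by
        apply Summable.of_nonneg_of_le (fun j => abs_nonneg _) (fun j => ?_) hsumabs
        by_cases h : j = j0 <;> simp [h, abs_nonneg]
      calc |∑' j, if j = j0 then 0 else b j|
          ≤ ∑' j, |if j = j0 then 0 else b j| := by
            simpa [Real.norm_eq_abs] using norm_tsum_le_tsum_norm
              (f := fun j => if j = j0 then 0 else b j) (by simpa [Real.norm_eq_abs] using hsum_ite2)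
        _ ≤ 3*δ := hoff
    have hφw : φ i (w m) = ∑' j, b j := hw m (φ i)
    rw [hφw, hsplit]
    have h3 := abs_le.1 hrem
    have hδ'' : δ = ε / 8 := hδ
    linarith [hdiag, h3.1, hδ'']
  have hlow : ∀ m, 3*ε/8 ≤ ghat (w m) := by
    intro m
    have htend := ulimCLM_tendsto U φ (C := 2) hφnorm (w m)
    have hev : ∀ᶠ i in (U : Filter ℕ), 3*ε/8 ≤ φ i (w m) :=
      hUle ((eventually_gt_atTop m).mono fun i hi => hkey m i hi)
    exact ge_of_tendsto htend hev
  have hzero : Tendsto (fun m => ghat (w m)) atTop (𝓝 0) := by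
    have h1 : Tendsto (fun N => ∑' j, ghat (y (k (j + N)))) atTop (𝓝 0) :=
      tendsto_sum_nat_add (fun l => ghat (y (k l)))
    have h2 : Tendsto (fun m : ℕ => m + 1) atTop atTop := tendsto_add_atTop_nat 1
    exact (h1.comp h2).congr fun m => (hw m ghat).symm
  obtain ⟨m, hm⟩ := (hzero.eventually_lt_const (by positivity : (0:ℝ) < 3*ε/8)).exists
  exact absurd (hlow m) (not_le.2 hm)

end X4
section Edual
variable {E : Type*} [AddCommGroup E] [Lattice E] [Module ℝ E]
  [CovariantClass E E (· + ·) (· ≤ ·)]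
  [TopologicalSpace E] [IsTopologicalAddGroup E] [ContinuousSMul ℝ E]

lemma exists_psi (x : ℕ → E) (hmono : Monotone x)
    (hbdd : IsVonNBounded ℝ (Set.range x)) :
    ∃ Ψ : (E →L[ℝ] ℝ) →L[ℝ] ℝ, ∀ f : E →L[ℝ] ℝ,
      (∀ v : E, 0 ≤ v → 0 ≤ f v) → ∀ n, f (x n) ≤ Ψ f := by
  classical
  set U : Ultrafilter ℕ := Ultrafilter.of atTop with hU
  have hUle : (U : Filter ℕ) ≤ atTop := Ultrafilter.of_le _
  have hbd : ∀ f : E →L[ℝ] ℝ, ∃ C, ∀ n, |f (x n)| ≤ C := by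
    intro f
    have h1 : IsVonNBounded ℝ (⇑f '' Set.range x) := hbdd.image f
    obtain ⟨C, hC⟩ := (NormedSpace.isVonNBounded_iff' (𝕜 := ℝ)).1 h1
    exact ⟨C, fun n => by
      simpa [Real.norm_eq_abs] using hC _ (Set.mem_image_of_mem _ (Set.mem_range_self n))⟩
  have htend : ∀ f : E →L[ℝ] ℝ, Tendsto (fun n => f (x n)) (U : Filter ℕ)
      (𝓝 (ulimR U (fun n => f (x n)))) := by
    intro f
    obtain ⟨C, hC⟩ := hbd f
    exact tendsto_ulimR U hC
  set L : (E →L[ℝ] ℝ) →ₗ[ℝ] ℝ :=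
    { toFun := fun f => ulimR U (fun n => f (x n))
      map_add' := fun f g => tendsto_nhds_unique (htend (f + g))
        (((htend f).add (htend g)).congr
          (fun n => (ContinuousLinearMap.add_apply f g (x n)).symm))
      map_smul' := fun c f => by
        refine tendsto_nhds_unique (htend (c • f)) ?_
        have := (htend f).const_mul c
        simp only [RingHom.id_apply, smul_eq_mul]
        exact this.congr (fun n => by
          rw [ContinuousLinearMap.smul_apply, smul_eq_mul]) } with hL
  have hcont0 : ContinuousAt L 0 := by
    rw [ContinuousAt]
    have hL0 : L 0 = 0 := map_zero L
    rw [hL0]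
    intro V hV
    obtain ⟨ε', hε'pos, hball⟩ := Metric.mem_nhds_iff.1 hV
    have hW : {f : E →L[ℝ] ℝ | ∀ v ∈ Set.range x, f v ∈ Metric.closedBall (0:ℝ) (ε'/2)}
        ∈ 𝓝 (0 : E →L[ℝ] ℝ) :=
      ContinuousLinearMap.hasBasis_nhds_zero.mem_of_mem
        (i := (Set.range x, Metric.closedBall (0:ℝ) (ε'/2)))
        ⟨hbdd, Metric.closedBall_mem_nhds 0 (by positivity : (0:ℝ) < ε'/2)⟩
    rw [Filter.mem_map]
    filter_upwards [hW] with f hf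
    have hbnd : ∀ n, |f (x n)| ≤ ε'/2 := by
      intro n
      have := hf (x n) (Set.mem_range_self n)
      simpa [Real.dist_eq] using this
    have : |L f| ≤ ε'/2 :=
      le_of_tendsto (htend f).abs (Filter.Eventually.of_forall hbnd)
    apply hball
    simp only [Metric.mem_ball, Real.dist_eq, sub_zero]
    have : |L f| < ε' := lt_of_le_of_lt this (by linarith)
    simpa using this
  have hcont : Continuous L := by
    rw [continuous_iff_continuousAt]
    intro f₀
    have hsub : Tendsto (fun f : E →L[ℝ] ℝ => f - f₀) (𝓝 f₀) (𝓝 0) := by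
      have := (continuous_id.sub (continuous_const (y := f₀))).tendsto f₀
      simpa [Pi.sub_def] using this
    have h2 : Tendsto (fun f : E →L[ℝ] ℝ => L (f - f₀)) (𝓝 f₀) (𝓝 (L 0)) :=
      hcont0.tendsto.comp hsub
    rw [map_zero] at h2
    have h3 : Tendsto (fun f => L f₀ + L (f - f₀)) (𝓝 f₀) (𝓝 (L f₀ + 0)) :=
      tendsto_const_nhds.add h2
    rw [add_zero] at h3
    rw [ContinuousAt]
    refine h3.congr fun f => ?_
    rw [← map_add]
    congr 1
    abel
  refine ⟨⟨L, hcont⟩, ?_⟩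
  intro f hf n
  have hmono' : ∀ p q, p ≤ q → f (x p) ≤ f (x q) := by
    intro p q hpq
    have h1 : (0:E) ≤ x q - x p := sub_nonneg.2 (hmono hpq)
    have := hf _ h1
    rw [map_sub] at this
    linarith
  exact ge_of_tendsto (htend f)
    (hUle ((eventually_ge_atTop n).mono fun p hp => hmono' n p hp))

end Edual

end AuxGbwc

/-- A gbwc operator T : E → X sends every increasing, topologically bounded
sequence of positive elements of E to a norm convergent sequence in X. -/
theorem gbwc_map_increasing_bounded_convergent
    {E : Type*} [AddCommGroup E] [Lattice E] [Module ℝ E]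
    [CovariantClass E E (· + ·) (· ≤ ·)] [PosSMulMono ℝ E]
    [TopologicalSpace E] [IsTopologicalAddGroup E] [ContinuousSMul ℝ E] [T2Space E]
    (hE : IsLocallyConvexSolid E)
    {X : Type*} [NormedAddCommGroup X] [NormedSpace ℝ X] [CompleteSpace X]
    (T : E →ₗ[ℝ] X) (hT : IsGbwc E X ⇑T) :
    ∀ x : ℕ → E, Monotone x → (∀ n, 0 ≤ x n) → IsVonNBounded ℝ (Set.range x) →
      ∃ y : X, Tendsto (fun n => T (x n)) atTop (nhds y) := by
  intro x hmono hpos hbdd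
  haveI : IsOrderedAddMonoid E :=
    { add_le_add_left := fun a b h c => by gcongr }
  obtain ⟨Ψ, hΨ⟩ := exists_psi x hmono hbdd
  have hcauchy : CauchySeq (fun n => T (x n)) := by
    by_contra hnc
    rw [Metric.cauchySeq_iff] at hnc
    push_neg at hnc
    obtain ⟨ε, hε, hN⟩ := hnc
    have hstep : ∀ N : ℕ, ∃ pq : ℕ × ℕ, N ≤ pq.1 ∧ pq.1 ≤ pq.2 ∧
        ε ≤ ‖T (x pq.2) - T (x pq.1)‖ := by
      intro N
      obtain ⟨p, hp, q, hq, hpq⟩ := hN N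
      rcases le_total p q with h | h
      · refine ⟨(p, q), hp, h, ?_⟩
        rwa [← dist_eq_norm, dist_comm]
      · refine ⟨(q, p), hq, h, ?_⟩
        rwa [← dist_eq_norm]
    set a : ℕ → ℕ × ℕ := fun i => Nat.rec (motive := fun _ => ℕ × ℕ)
      (Classical.choose (hstep 0))
      (fun _ prev => Classical.choose (hstep (prev.2 + 1))) i with ha
    have hspec : ∀ i, (a i).1 ≤ (a i).2 ∧ ε ≤ ‖T (x (a i).2) - T (x (a i).1)‖ := by
      intro i
      cases i with
      | zero =>
        have h0 := Classical.choose_spec (hstep 0)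
        exact ⟨h0.2.1, h0.2.2⟩
      | succ i =>
        have h0 := Classical.choose_spec (hstep ((a i).2 + 1))
        exact ⟨h0.2.1, h0.2.2⟩
    have hgap : ∀ i, (a i).2 < (a (i+1)).1 := by
      intro i
      have h0 := Classical.choose_spec (hstep ((a i).2 + 1))
      exact lt_of_lt_of_le (Nat.lt_succ_self _) h0.1
    have hzpos : ∀ i, (0:E) ≤ x (a i).2 - x (a i).1 :=
      fun i => sub_nonneg.2 (hmono (hspec i).1)
    have hpsum : ∀ K, (∑ i ∈ Finset.range (K+1), (x (a i).2 - x (a i).1)) ≤ x (a K).2 := by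
      intro K
      induction K with
      | zero =>
        simpa using sub_le_self (x (a 0).2) (hpos (a 0).1)
      | succ K ih =>
        rw [Finset.sum_range_succ]
        have h1 : x (a K).2 ≤ x (a (K+1)).1 := hmono (le_of_lt (hgap K))
        calc (∑ i ∈ Finset.range (K+1), (x (a i).2 - x (a i).1))
              + (x (a (K+1)).2 - x (a (K+1)).1)
            ≤ x (a K).2 + (x (a (K+1)).2 - x (a (K+1)).1) := by gcongr
          _ ≤ x (a (K+1)).1 + (x (a (K+1)).2 - x (a (K+1)).1) := by gcongr
          _ = x (a (K+1)).2 := by abel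
    set B : Set E := {e | ∃ F : Finset ℕ, e = ∑ i ∈ F, (x (a i).2 - x (a i).1)} with hB
    have hTB : TopBOrderBounded E B := by
      refine ⟨0, Ψ, ?_⟩
      rintro e ⟨F, rfl⟩ f hf
      constructor
      · have h0 : (0:E) ≤ ∑ i ∈ F, (x (a i).2 - x (a i).1) :=
          Finset.sum_nonneg fun i _ => hzpos i
        simpa using hf _ h0
      · have hsub : F ⊆ Finset.range (F.sup id + 1) := fun i hi =>
          Finset.mem_range.2 (Nat.lt_succ_of_le (Finset.le_sup (f := id) hi))
        have hle1 : (∑ i ∈ F, (x (a i).2 - x (a i).1))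
            ≤ ∑ i ∈ Finset.range (F.sup id + 1), (x (a i).2 - x (a i).1) :=
          Finset.sum_le_sum_of_subset_of_nonneg hsub (fun i _ _ => hzpos i)
        have hfm : f (∑ i ∈ F, (x (a i).2 - x (a i).1)) ≤ f (x (a (F.sup id)).2) := by
          have hd : (0:E) ≤ x (a (F.sup id)).2 - ∑ i ∈ F, (x (a i).2 - x (a i).1) :=
            sub_nonneg.2 (hle1.trans (hpsum (F.sup id)))
          have := hf _ hd
          rw [map_sub] at this
          linarith
        exact hfm.trans (hΨ f hf (a (F.sup id)).2)
    have hRW := hT B hTB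
    refine banach_core (X := X) (fun i => T (x (a i).2) - T (x (a i).1)) (⇑T '' B)
      ?_ hRW hε ?_
    · intro F
      refine ⟨∑ i ∈ F, (x (a i).2 - x (a i).1), ⟨F, rfl⟩, ?_⟩
      rw [map_sum]
      exact Finset.sum_congr rfl fun i _ => map_sub T _ _
    · intro i
      exact (hspec i).2
  exact cauchySeq_tendsto_of_complete hcauchy
end

section
/- Let T : E → X be an operator from a normed Riesz space into a Banach space. If the sequence (T x_n) is norm convergent in X for every increasing, norm bounded sequence (x_n) of positive elements of E, then T is a continuous operator. -/
open Filter Topology Set Bornology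

/-- An operator T from a normed Riesz space into a Banach space such that
(T xₙ) is norm convergent for every increasing, norm bounded sequence (xₙ) of positive
elements is continuous. -/
theorem continuous_of_convergent_on_increasing
    {E : Type*} [NormedAddCommGroup E] [Lattice E] [HasSolidNorm E] [IsOrderedAddMonoid E]
      [NormedSpace ℝ E] [PosSMulMono ℝ E]
    {X : Type*} [NormedAddCommGroup X] [NormedSpace ℝ X] [CompleteSpace X]
    (T : E →ₗ[ℝ] X)
    (h : ∀ x : ℕ → E, Monotone x → (∀ n, 0 ≤ x n) → (∃ C : ℝ, ∀ n, ‖x n‖ ≤ C) →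
      ∃ y : X, Tendsto (fun n => T (x n)) atTop (nhds y)) :
    Continuous ⇑T := by
  -- It suffices to show T is bounded.
  by_contra hc
  have hub : ∀ C : ℝ, ∃ u : E, ‖u‖ ≤ 1 ∧ C < ‖T u‖ := by
    by_contra hB
    push_neg at hB
    obtain ⟨C, hC⟩ := hB
    apply hc
    refine AddMonoidHomClass.continuous_of_bound T C fun x => ?_
    rcases eq_or_ne x 0 with rfl | hx
    · simp
    · have hx' : (0:ℝ) < ‖x‖ := norm_pos_iff.mpr hx
      have h1 : ‖(‖x‖⁻¹ • x)‖ ≤ 1 := by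
        rw [norm_smul, norm_inv, norm_norm, inv_mul_cancel₀ hx'.ne']
      have := hC (‖x‖⁻¹ • x) h1
      rw [map_smul, norm_smul, norm_inv, norm_norm] at this
      calc ‖T x‖ = ‖x‖ * (‖x‖⁻¹ * ‖T x‖) := by field_simp
        _ ≤ ‖x‖ * C := by gcongr
        _ = C * ‖x‖ := mul_comm _ _
  -- pick u n with ‖u n‖ ≤ 1 and ‖T (u n)‖ > 2 * 4^n
  choose u hu1 hu2 using fun n : ℕ => hub (2 * 4 ^ n)
  -- positive parts
  have key : ∀ n : ℕ, ∃ v : E, 0 ≤ v ∧ ‖v‖ ≤ 1 ∧ (4:ℝ) ^ n ≤ ‖T v‖ := by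
    intro n
    have hsplit : u n = (u n)⁺ - (u n)⁻ := (posPart_sub_negPart (u n)).symm
    have habs : ∀ w : E, w⁺ ≤ |w| := fun w => sup_le (le_abs_self w) (abs_nonneg w)
    have hp : ‖(u n)⁺‖ ≤ 1 := by
      refine le_trans (HasSolidNorm.solid ?_) (hu1 n)
      rw [abs_of_nonneg (posPart_nonneg _)]; exact habs _
    have hm : ‖(u n)⁻‖ ≤ 1 := by
      refine le_trans (HasSolidNorm.solid ?_) (hu1 n)
      rw [abs_of_nonneg (negPart_nonneg _)]
      calc (u n)⁻ = (-(u n))⁺ := by rw [posPart_neg]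
        _ ≤ |(-(u n))| := habs _
        _ = |u n| := abs_neg _
    have hsum : 2 * (4:ℝ) ^ n < ‖T ((u n)⁺)‖ + ‖T ((u n)⁻)‖ := by
      calc 2 * (4:ℝ) ^ n < ‖T (u n)‖ := hu2 n
        _ = ‖T ((u n)⁺) - T ((u n)⁻)‖ := by rw [← map_sub, ← hsplit]
        _ ≤ ‖T ((u n)⁺)‖ + ‖T ((u n)⁻)‖ := norm_sub_le _ _
    by_cases hcase : (4:ℝ) ^ n ≤ ‖T ((u n)⁺)‖
    · exact ⟨(u n)⁺, posPart_nonneg _, hp, hcase⟩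
    · refine ⟨(u n)⁻, negPart_nonneg _, hm, ?_⟩
      push_neg at hcase
      nlinarith [hsum]
  choose v hv0 hv1 hv2 using key
  set y : ℕ → E := fun n => (1/2 : ℝ) ^ n • v n with hy
  have hy0 : ∀ n, 0 ≤ y n := fun n =>
    smul_nonneg (by positivity) (hv0 n)
  have hyn : ∀ n, ‖y n‖ ≤ (1/2 : ℝ) ^ n := by
    intro n
    rw [hy]
    simp only [norm_smul, Real.norm_eq_abs]
    calc |(1/2:ℝ)^n| * ‖v n‖ ≤ |(1/2:ℝ)^n| * 1 := by
          gcongr; exact hv1 n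
      _ = (1/2:ℝ)^n := by rw [mul_one, abs_of_nonneg (by positivity)]
  have hTy : ∀ n, (2:ℝ) ^ n ≤ ‖T (y n)‖ := by
    intro n
    rw [hy]
    simp only [map_smul, norm_smul, Real.norm_eq_abs,
      abs_of_nonneg (show (0:ℝ) ≤ (1/2:ℝ)^n by positivity)]
    calc (2:ℝ)^n = (1/2:ℝ)^n * 4^n := by
          rw [div_pow, one_pow, div_mul_eq_mul_div, eq_div_iff (by positivity), ← mul_pow]
          norm_num
      _ ≤ (1/2:ℝ)^n * ‖T (v n)‖ := by gcongr; exact hv2 n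
  -- partial sums
  set s : ℕ → E := fun n => ∑ k ∈ Finset.range n, y k with hs
  have hmono : Monotone s := by
    apply monotone_nat_of_le_succ
    intro n
    rw [hs]
    simp only [Finset.sum_range_succ]
    exact le_add_of_nonneg_right (hy0 n)
  have hpos : ∀ n, 0 ≤ s n := fun n => Finset.sum_nonneg fun k _ => hy0 k
  have hbdd : ∃ C : ℝ, ∀ n, ‖s n‖ ≤ C := by
    refine ⟨2, fun n => ?_⟩
    calc ‖s n‖ ≤ ∑ k ∈ Finset.range n, ‖y k‖ := norm_sum_le _ _
      _ ≤ ∑ k ∈ Finset.range n, (1/2:ℝ)^k := Finset.sum_le_sum fun k _ => hyn k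
      _ ≤ 2 := sum_geometric_two_le n
  obtain ⟨l, hl⟩ := h s hmono hpos hbdd
  have hcauchy : CauchySeq fun n => T (s n) := hl.cauchySeq
  have hdiff : Tendsto (fun n => T (s (n+1)) - T (s n)) atTop (nhds 0) := by
    have h1 : Tendsto (fun n => T (s (n+1))) atTop (nhds l) :=
      hl.comp (tendsto_add_atTop_nat 1)
    simpa using h1.sub hl
  have hTyz : Tendsto (fun n => T (y n)) atTop (nhds 0) := by
    have : ∀ n, T (s (n+1)) - T (s n) = T (y n) := by
      intro n
      rw [← map_sub, hs]
      simp [Finset.sum_range_succ]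
    simpa only [this] using hdiff
  have : ∀ᶠ n in atTop, ‖T (y n)‖ < 1 := by
    have h0 : Tendsto (fun n => ‖T (y n)‖) atTop (nhds 0) := by simpa using hTyz.norm
    exact h0.eventually (eventually_lt_nhds (by norm_num : (0:ℝ) < 1))
  obtain ⟨n, hn⟩ := this.exists
  have h2n : (1:ℝ) ≤ 2 ^ n := one_le_pow₀ (by norm_num)
  linarith [hTy n]
end

section
/- Let E be a normed Riesz space and X a Banach space. Then the set W_gbc(E, X) of all generalized b-weakly compact continuous operators from E into X is a norm closed vector subspace of the Banach space L(E, X) of all continuous linear operators from E into X with the operator norm. -/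
open Filter Topology Set Bornology

section PosPart
variable {E : Type*} [NormedAddCommGroup E] [Lattice E] [IsOrderedAddMonoid E] [HasSolidNorm E]
  [NormedSpace ℝ E]

/-- Existence of a dominating positive functional with controlled norm. -/
lemma exists_pos_dominating (f : E →L[ℝ] ℝ) :
    ∃ g : E →L[ℝ] ℝ, (∀ x : E, 0 ≤ x → 0 ≤ g x) ∧ (∀ x : E, 0 ≤ x → f x ≤ g x) ∧
      ‖g‖ ≤ 2 * ‖f‖ := by
  classical
  set p : E → ℝ := fun x => sSup (f '' {y : E | 0 ≤ y ∧ y ≤ x}) with hp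
  have hbdd : ∀ x : E, 0 ≤ x → ∀ z ∈ f '' {y : E | 0 ≤ y ∧ y ≤ x}, z ≤ ‖f‖ * ‖x‖ := by
    rintro x hx z ⟨y, ⟨hy0, hyx⟩, rfl⟩
    have hnorm : ‖y‖ ≤ ‖x‖ := by
      refine HasSolidNorm.solid ?_
      rw [abs_of_nonneg hy0, abs_of_nonneg hx]; exact hyx
    calc f y ≤ |f y| := le_abs_self _
    _ ≤ ‖f‖ * ‖y‖ := f.le_opNorm y
    _ ≤ ‖f‖ * ‖x‖ := by gcongr
  have hBdd : ∀ x : E, 0 ≤ x → BddAbove (f '' {y : E | 0 ≤ y ∧ y ≤ x}) :=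
    fun x hx => ⟨‖f‖ * ‖x‖, fun z hz => hbdd x hx z hz⟩
  have hmem0 : ∀ x : E, 0 ≤ x → (0 : ℝ) ∈ f '' {y : E | 0 ≤ y ∧ y ≤ x} :=
    fun x hx => ⟨0, ⟨le_rfl, hx⟩, map_zero f⟩
  have hp_nonneg : ∀ x : E, 0 ≤ x → 0 ≤ p x :=
    fun x hx => le_csSup (hBdd x hx) (hmem0 x hx)
  have hp_le : ∀ x : E, 0 ≤ x → p x ≤ ‖f‖ * ‖x‖ :=
    fun x hx => csSup_le ⟨0, hmem0 x hx⟩ (hbdd x hx)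
  have hf_le_p : ∀ x : E, 0 ≤ x → f x ≤ p x :=
    fun x hx => le_csSup (hBdd x hx) ⟨x, ⟨hx, le_rfl⟩, rfl⟩
  have hp_add : ∀ x y : E, 0 ≤ x → 0 ≤ y → p (x + y) = p x + p y := by
    intro x y hx hy
    have hxy : 0 ≤ x + y := add_nonneg hx hy
    apply le_antisymm
    · refine csSup_le ⟨0, hmem0 _ hxy⟩ ?_
      rintro z ⟨w, ⟨hw0, hwxy⟩, rfl⟩
      have h1 : 0 ≤ w ⊓ x := le_inf hw0 hx
      have h2 : w ⊓ x ≤ x := inf_le_right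
      have h3 : 0 ≤ w - w ⊓ x := sub_nonneg.mpr inf_le_left
      have h4 : w - w ⊓ x ≤ y := by
        rw [sub_le_iff_le_add, ← sub_le_iff_le_add']
        exact le_inf (by simpa using hy) (sub_le_iff_le_add.mpr hwxy)
      have hw : w = w ⊓ x + (w - w ⊓ x) := by abel
      have := le_csSup (hBdd x hx) (⟨w ⊓ x, ⟨h1, h2⟩, rfl⟩ :
        f (w ⊓ x) ∈ f '' {y : E | 0 ≤ y ∧ y ≤ x})
      have := le_csSup (hBdd y hy) (⟨w - w ⊓ x, ⟨h3, h4⟩, rfl⟩ :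
        f (w - w ⊓ x) ∈ f '' {z : E | 0 ≤ z ∧ z ≤ y})
      have hfw : f w = f (w ⊓ x) + f (w - w ⊓ x) := by
        have hw' : w ⊓ x + (w - w ⊓ x) = w := by abel
        rw [← map_add, hw']
      linarith
    · have key : ∀ u ∈ {y : E | 0 ≤ y ∧ y ≤ x}, ∀ v ∈ {z : E | 0 ≤ z ∧ z ≤ y},
          f u + f v ≤ p (x + y) := by
        rintro u ⟨hu0, hux⟩ v ⟨hv0, hvy⟩
        have : f (u + v) ∈ f '' {y_1 : E | 0 ≤ y_1 ∧ y_1 ≤ x + y} :=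
          ⟨u + v, ⟨add_nonneg hu0 hv0, add_le_add hux hvy⟩, rfl⟩
        have := le_csSup (hBdd _ hxy) this
        rw [map_add] at this; exact this
      have h1 : p x ≤ p (x + y) - p y := by
        refine csSup_le ⟨0, hmem0 x hx⟩ ?_
        rintro z ⟨u, hu, rfl⟩
        rw [le_sub_iff_add_le]
        have h2 : p y ≤ p (x + y) - f u := by
          refine csSup_le ⟨0, hmem0 y hy⟩ ?_
          rintro z ⟨v, hv, rfl⟩
          linarith [key u hu v hv]
        linarith
      linarith
  -- the candidate positive part, as a plain function
  set g0 : E → ℝ := fun x => p x⁺ - p x⁻ with hg0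
  have habs_norm : ∀ x : E, ‖x⁺‖ ≤ ‖x‖ ∧ ‖x⁻‖ ≤ ‖x‖ := by
    intro x
    constructor
    · refine HasSolidNorm.solid ?_
      rw [abs_of_nonneg (posPart_nonneg x), posPart_def]
      exact sup_le (le_abs_self x) (abs_nonneg x)
    · refine HasSolidNorm.solid ?_
      rw [abs_of_nonneg (negPart_nonneg x), negPart_def]
      exact sup_le (neg_le_abs x) (abs_nonneg x)
  have hg0_add : ∀ x y : E, g0 (x + y) = g0 x + g0 y := by
    intro x y
    have hkey : (x + y)⁺ + (x⁻ + y⁻) = (x + y)⁻ + (x⁺ + y⁺) := by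
      have e1 : (x + y)⁺ - (x + y)⁻ = x + y := posPart_sub_negPart _
      have e2 : x⁺ - x⁻ = x := posPart_sub_negPart _
      have e3 : y⁺ - y⁻ = y := posPart_sub_negPart _
      have e1' : (x + y)⁺ = x + y + (x + y)⁻ := sub_eq_iff_eq_add.mp e1
      have e2' : x⁺ = x + x⁻ := sub_eq_iff_eq_add.mp e2
      have e3' : y⁺ = y + y⁻ := sub_eq_iff_eq_add.mp e3
      rw [e1', e2', e3']; abel
    have hP : p ((x + y)⁺ + (x⁻ + y⁻)) = p (x + y)⁺ + (p x⁻ + p y⁻) := by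
      rw [hp_add _ _ (posPart_nonneg _) (add_nonneg (negPart_nonneg _) (negPart_nonneg _)),
        hp_add _ _ (negPart_nonneg _) (negPart_nonneg _)]
    have hQ : p ((x + y)⁻ + (x⁺ + y⁺)) = p (x + y)⁻ + (p x⁺ + p y⁺) := by
      rw [hp_add _ _ (negPart_nonneg _) (add_nonneg (posPart_nonneg _) (posPart_nonneg _)),
        hp_add _ _ (posPart_nonneg _) (posPart_nonneg _)]
    have : p (x + y)⁺ + (p x⁻ + p y⁻) = p (x + y)⁻ + (p x⁺ + p y⁺) := by
      rw [← hP, ← hQ, hkey]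
    simp only [hg0]; linarith
  have hg0_bound : ∀ x : E, |g0 x| ≤ 2 * ‖f‖ * ‖x‖ := by
    intro x
    have h1 := hp_nonneg _ (posPart_nonneg x)
    have h2 := hp_nonneg _ (negPart_nonneg x)
    have h3 := hp_le _ (posPart_nonneg x)
    have h4 := hp_le _ (negPart_nonneg x)
    have h5 := (habs_norm x).1
    have h6 := (habs_norm x).2
    have hf0 : 0 ≤ ‖f‖ := norm_nonneg f
    rw [abs_le]
    constructor <;> simp only [hg0] <;> nlinarith
  have hcont : Continuous g0 := by
    have hlip : LipschitzWith (2 * ‖f‖).toNNReal g0 := by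
      refine LipschitzWith.of_dist_le_mul ?_
      intro x y
      have hxy : g0 x - g0 y = g0 (x - y) := by
        have := hg0_add (x - y) y
        simp only [sub_add_cancel] at this
        linarith
      rw [Real.dist_eq, hxy, Real.coe_toNNReal _ (by positivity), dist_eq_norm]
      exact hg0_bound (x - y)
    exact hlip.continuous
  set gAdd : E →+ ℝ := AddMonoidHom.mk' g0 hg0_add with hgAdd
  set g : E →L[ℝ] ℝ := gAdd.toRealLinearMap hcont with hg
  have hgapp : ∀ x : E, g x = g0 x := fun x => rfl
  have hp0 : p (0 : E) = 0 :=
    le_antisymm (by simpa using hp_le 0 le_rfl) (hp_nonneg 0 le_rfl)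
  have hgx : ∀ x : E, 0 ≤ x → g x = p x := by
    intro x hx
    rw [hgapp, hg0]
    simp only [posPart_eq_self.mpr hx, negPart_eq_zero.mpr hx, hp0, sub_zero]
  refine ⟨g, ?_, ?_, ?_⟩
  · intro x hx; rw [hgx x hx]; exact hp_nonneg x hx
  · intro x hx; rw [hgx x hx]; exact hf_le_p x hx
  · refine g.opNorm_le_bound (by positivity) ?_
    intro x
    rw [hgapp, Real.norm_eq_abs]
    exact hg0_bound x
end PosPart

section Bound
variable {E : Type*} [NormedAddCommGroup E] [Lattice E] [IsOrderedAddMonoid E] [HasSolidNorm E]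
  [NormedSpace ℝ E]

set_option maxHeartbeats 1000000 in
lemma topBOrderBounded_norm_bound {A : Set E} (hA : TopBOrderBounded E A) :
    ∃ M : ℝ, 0 ≤ M ∧ ∀ a ∈ A, ‖a‖ ≤ M := by
  obtain ⟨φ, ψ, hφψ⟩ := hA
  refine ⟨5 * (‖φ‖ + ‖ψ‖), by positivity, ?_⟩
  intro a ha
  refine NormedSpace.norm_le_dual_bound ℝ a (by positivity) ?_
  intro f
  obtain ⟨g, hgpos, hgdom, hgnorm⟩ := exists_pos_dominating f
  set h : E →L[ℝ] ℝ := g - f with hh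
  have hhpos : ∀ x : E, 0 ≤ x → 0 ≤ h x := by
    intro x hx
    have := hgdom x hx
    simp only [hh, ContinuousLinearMap.sub_apply]
    linarith
  have hhnorm : ‖h‖ ≤ 3 * ‖f‖ := by
    calc ‖h‖ ≤ ‖g‖ + ‖f‖ := norm_sub_le g f
    _ ≤ 2 * ‖f‖ + ‖f‖ := by linarith
    _ = 3 * ‖f‖ := by ring
  have key : ∀ k : E →L[ℝ] ℝ, (∀ x : E, 0 ≤ x → 0 ≤ k x) → |k a| ≤ (‖φ‖ + ‖ψ‖) * ‖k‖ := by
    intro k hk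
    obtain ⟨h1, h2⟩ := hφψ a ha k hk
    have hφk : |φ k| ≤ ‖φ‖ * ‖k‖ := φ.le_opNorm k
    have hψk : |ψ k| ≤ ‖ψ‖ * ‖k‖ := ψ.le_opNorm k
    rw [abs_le] at hφk hψk ⊢
    have hn : 0 ≤ ‖k‖ := norm_nonneg k
    have h3 : 0 ≤ ‖φ‖ := norm_nonneg φ
    have h4 : 0 ≤ ‖ψ‖ := norm_nonneg ψ
    constructor <;> nlinarith
  have hga := key g hgpos
  have hha := key h hhpos
  have hfa : f a = g a - h a := by simp [hh]
  have hf0 : 0 ≤ ‖f‖ := norm_nonneg f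
  have h3 : 0 ≤ ‖φ‖ := norm_nonneg φ
  have h4 : 0 ≤ ‖ψ‖ := norm_nonneg ψ
  rw [Real.norm_eq_abs, abs_le]
  rw [abs_le] at hga hha
  constructor <;> nlinarith [mul_le_mul_of_nonneg_left hgnorm (by positivity : (0:ℝ) ≤ ‖φ‖ + ‖ψ‖), mul_le_mul_of_nonneg_left hhnorm (by positivity : (0:ℝ) ≤ ‖φ‖ + ‖ψ‖)]
end Bound


section WeakCompactness
open NormedSpace Pointwise

section WC
variable (X : Type*) [NormedAddCommGroup X] [NormedSpace ℝ X]

/-- The canonical map into the bidual, from the weak space to the weak-star bidual. -/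
noncomputable def jmap : WeakSpace ℝ X → WeakDual ℝ (StrongDual ℝ X) :=
  fun x => (inclusionInDoubleDual ℝ X x : StrongDual ℝ (StrongDual ℝ X))

lemma isInducing_jmap : Topology.IsInducing (jmap X) := by
  constructor
  show (WeakBilin.instTopologicalSpace _ : TopologicalSpace (WeakSpace ℝ X)) =
    TopologicalSpace.induced (jmap X) (WeakBilin.instTopologicalSpace _)
  show TopologicalSpace.induced _ _ = TopologicalSpace.induced _ (TopologicalSpace.induced _ _)
  refine Eq.trans ?_ induced_compose.symm
  rfl

lemma injective_jmap : Function.Injective (jmap X) :=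
  (inclusionInDoubleDualLi ℝ (E := X)).injective

lemma t2_weakSpace : T2Space (WeakSpace ℝ X) :=
  Topology.IsEmbedding.t2Space ⟨isInducing_jmap X, injective_jmap X⟩
end WC

section Main
variable (X : Type*) [NormedAddCommGroup X] [NormedSpace ℝ X] [CompleteSpace X]

lemma relWeaklyCompact_of_approx (s : Set X)
    (h : ∀ ε : ℝ, 0 < ε → ∃ t : Set X, RelWeaklyCompact X t ∧ ∀ x ∈ s, ∃ y ∈ t, ‖x - y‖ ≤ ε) :
    RelWeaklyCompact X s := by
  classical
  set D := StrongDual ℝ X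
  set j := jmap X with hj
  have hind := isInducing_jmap X
  have hc : Continuous j := hind.continuous
  -- choose approximating relatively weakly compact sets
  have hchoice : ∀ n : ℕ, ∃ t : Set X, RelWeaklyCompact X t ∧
      ∀ x ∈ s, ∃ y ∈ t, ‖x - y‖ ≤ 1 / (n + 1) := fun n => h _ (by positivity)
  choose t ht happ using hchoice
  set ι : X → WeakSpace ℝ X := ⇑(toWeakSpace ℝ X) with hι
  -- the compact pieces in the weak-star bidual
  set K : ℕ → Set (WeakDual ℝ D) := fun n => j '' closure (ι '' t n) with hK
  have hKcpt : ∀ n, IsCompact (K n) := fun n => (ht n).image hc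
  set B : ℕ → Set (WeakDual ℝ D) :=
    fun n => WeakDual.toStrongDual ⁻¹' Metric.closedBall 0 (1 / (n + 1)) with hB
  have hBcpt : ∀ n, IsCompact (B n) := fun n => WeakDual.isCompact_closedBall 0 _
  have hsum : ∀ n, IsCompact (K n + B n) := fun n => (hKcpt n).add (hBcpt n)
  have hsumcl : ∀ n, IsClosed (K n + B n) := fun n => (hsum n).isClosed
  -- the image of s in the bidual is inside each K n + B n
  have hsub : ∀ n, j '' (ι '' s) ⊆ K n + B n := by
    intro n z hz
    obtain ⟨_, ⟨x, hx, rfl⟩, rfl⟩ := hz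
    obtain ⟨y, hy, hxy⟩ := happ n x hx
    rw [Set.mem_add]
    refine ⟨j (ι y), ⟨ι y, subset_closure (Set.mem_image_of_mem _ hy), rfl⟩,
      j (ι x) - j (ι y), ?_, by abel⟩
    show WeakDual.toStrongDual (j (ι x) - j (ι y)) ∈ Metric.closedBall 0 (1 / (n + 1))
    rw [Metric.mem_closedBall]
    refine (dist_zero_right (WeakDual.toStrongDual (j (ι x) - j (ι y)) :
      StrongDual ℝ (StrongDual ℝ X))).trans_le ?_
    have : WeakDual.toStrongDual (j (ι x) - j (ι y)) = inclusionInDoubleDual ℝ X (x - y) := by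
      rw [map_sub (inclusionInDoubleDual ℝ X)]; rfl
    rw [this]
    calc ‖inclusionInDoubleDual ℝ X (x - y)‖
        = ‖x - y‖ := (inclusionInDoubleDualLi ℝ (E := X)).norm_map _
      _ ≤ 1 / (n + 1) := hxy
  have hclsub : ∀ n, closure (j '' (ι '' s)) ⊆ K n + B n :=
    fun n => closure_minimal (hsub n) (hsumcl n)
  -- the closure upstairs is compact
  have hclcpt : IsCompact (closure (j '' (ι '' s))) :=
    (hsum 0).of_isClosed_subset isClosed_closure (hclsub 0)
  -- every point of the closure upstairs comes from X
  have hrange : closure (j '' (ι '' s)) ⊆ Set.range j := by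
    intro χ hχ
    have hdec : ∀ n : ℕ, ∃ u ∈ K n, ∃ b ∈ B n, u + b = χ := by
      intro n
      exact Set.mem_add.mp (hclsub n hχ)
    choose u hu b hb hub using hdec
    have hu' : ∀ n, ∃ w : X, u n = j (ι w) := by
      intro n
      obtain ⟨z, _, hz⟩ := hu n
      obtain ⟨w, -, rfl⟩ : ∃ w : X, w ∈ Set.univ ∧ ι w = z := by
        exact ⟨(toWeakSpace ℝ X).symm z, Set.mem_univ _, by simp [hι]⟩
      exact ⟨_, hz.symm⟩
    choose w hw using hu'
    -- norm convergence to χ in the normed bidual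
    have hdist : ∀ n : ℕ, ‖WeakDual.toStrongDual χ - inclusionInDoubleDual ℝ X (w n)‖
        ≤ 1 / (n + 1) := by
      intro n
      have hbn := hb n
      have : WeakDual.toStrongDual χ - inclusionInDoubleDual ℝ X (w n)
          = WeakDual.toStrongDual (b n) := by
        rw [← hub n, hw n, map_add]
        show inclusionInDoubleDual ℝ X (w n) + WeakDual.toStrongDual (b n)
          - inclusionInDoubleDual ℝ X (w n) = _
        abel
      rw [this]
      have hbn' : WeakDual.toStrongDual (b n) ∈ Metric.closedBall 0 (1 / (n + 1)) := hbn
      rw [Metric.mem_closedBall] at hbn'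
      exact (dist_zero_right (WeakDual.toStrongDual (b n) :
        StrongDual ℝ (StrongDual ℝ X))).symm.trans_le hbn'
    have htend : Tendsto (fun n => inclusionInDoubleDual ℝ X (w n)) atTop
        (nhds (WeakDual.toStrongDual χ)) := by
      refine (tendsto_iff_dist_tendsto_zero (α := StrongDual ℝ (StrongDual ℝ X))).2 ?_
      refine squeeze_zero (g := fun n : ℕ => 1 / (n + 1)) (fun n => dist_nonneg)
        (fun n => ?_) ?_
      · refine (dist_eq_norm (E := StrongDual ℝ (StrongDual ℝ X)) _ _).trans_le ?_
        exact (norm_sub_rev (E := StrongDual ℝ (StrongDual ℝ X)) _ _).trans_le (hdist n)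
      · exact tendsto_one_div_add_atTop_nhds_zero_nat
    have hclosedrange : IsClosed (Set.range (inclusionInDoubleDual ℝ X)) := by
      have : Isometry (inclusionInDoubleDual ℝ X) :=
        (inclusionInDoubleDualLi ℝ (E := X)).isometry
      exact this.isClosedEmbedding.isClosed_range
    have : WeakDual.toStrongDual χ ∈ Set.range (inclusionInDoubleDual ℝ X) := by
      rw [← hclosedrange.closure_eq]
      exact mem_closure_of_tendsto htend (Eventually.of_forall fun n => Set.mem_range_self _)
    obtain ⟨x0, hx0⟩ := this
    exact ⟨ι x0, (WeakDual.toStrongDual (𝕜 := ℝ)).injective hx0⟩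
  -- pull back compactness along the inducing map
  have hpre : IsCompact (j ⁻¹' closure (j '' (ι '' s))) :=
    hind.isCompact_preimage' hclcpt hrange
  exact hpre.of_isClosed_subset isClosed_closure (closure_subset_preimage_closure_image hc)
end Main

section Ops
variable (X : Type*) [NormedAddCommGroup X] [NormedSpace ℝ X]

lemma relWeaklyCompact_mono {s u : Set X} (hsu : s ⊆ u) (hu : RelWeaklyCompact X u) :
    RelWeaklyCompact X s :=
  hu.of_isClosed_subset isClosed_closure (closure_mono (Set.image_mono hsu))

lemma relWeaklyCompact_singleton (x : X) : RelWeaklyCompact X {x} := by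
  haveI := t2_weakSpace X
  show IsCompact (closure (toWeakSpace ℝ X '' {x}))
  rw [Set.image_singleton, closure_singleton]
  exact isCompact_singleton

lemma relWeaklyCompact_add {s u : Set X} (hs : RelWeaklyCompact X s)
    (hu : RelWeaklyCompact X u) : RelWeaklyCompact X (s + u) := by
  haveI := t2_weakSpace X
  have hK : IsCompact (closure (toWeakSpace ℝ X '' s) + closure (toWeakSpace ℝ X '' u)) :=
    hs.add hu
  refine hK.of_isClosed_subset isClosed_closure (closure_minimal ?_ hK.isClosed)
  rintro _ ⟨z, ⟨x, hx, y, hy, rfl⟩, rfl⟩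
  exact Set.add_mem_add (subset_closure (Set.mem_image_of_mem _ hx))
    (subset_closure (Set.mem_image_of_mem _ hy))

lemma relWeaklyCompact_smul (c : ℝ) {s : Set X} (hs : RelWeaklyCompact X s) :
    RelWeaklyCompact X (c • s) := by
  haveI := t2_weakSpace X
  haveI : ContinuousSMul ℝ (WeakSpace ℝ X) :=
    WeakBilin.instContinuousSMul ((topDualPairing ℝ X).flip)
  have hm : Continuous fun x : WeakSpace ℝ X => c • x := continuous_const_smul c
  have hK : IsCompact ((fun x : WeakSpace ℝ X => c • x) '' closure (toWeakSpace ℝ X '' s)) :=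
    hs.image hm
  refine hK.of_isClosed_subset isClosed_closure (closure_minimal ?_ hK.isClosed)
  rintro _ ⟨z, ⟨x, hx, rfl⟩, rfl⟩
  exact ⟨toWeakSpace ℝ X x, subset_closure (Set.mem_image_of_mem _ hx), by
    exact (map_smul (toWeakSpace ℝ X) c x).symm⟩
end Ops

end WeakCompactness

/-- For a normed Riesz space E and a Banach space X, the set of gbwc
continuous operators is a norm closed vector subspace of L(E, X). -/
theorem gbwc_closed_submodule
    {E : Type*} [NormedAddCommGroup E] [Lattice E] [IsOrderedAddMonoid E] [HasSolidNorm E]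
      [NormedSpace ℝ E] [PosSMulMono ℝ E]
    {X : Type*} [NormedAddCommGroup X] [NormedSpace ℝ X] [CompleteSpace X] :
    ∃ W : Submodule ℝ (E →L[ℝ] X),
      (↑W : Set (E →L[ℝ] X)) = {T : E →L[ℝ] X | IsGbwc E X ⇑T} ∧
      IsClosed (↑W : Set (E →L[ℝ] X)) := by
  refine ⟨{ carrier := {T : E →L[ℝ] X | IsGbwc E X ⇑T},
            add_mem' := ?_, zero_mem' := ?_, smul_mem' := ?_ }, rfl, ?_⟩
  · -- addition
    intro T S hT hS A hA
    refine relWeaklyCompact_mono X ?_ (relWeaklyCompact_add X (hT A hA) (hS A hA))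
    rintro _ ⟨a, ha, rfl⟩
    exact Set.add_mem_add (Set.mem_image_of_mem _ ha) (Set.mem_image_of_mem _ ha)
  · -- zero
    intro A hA
    refine relWeaklyCompact_mono X ?_ (relWeaklyCompact_singleton X (0 : X))
    rintro _ ⟨a, ha, rfl⟩
    simp
  · -- scalar multiplication
    intro c T hT A hA
    refine relWeaklyCompact_mono X ?_ (relWeaklyCompact_smul X c (hT A hA))
    rintro _ ⟨a, ha, rfl⟩
    exact Set.smul_mem_smul_set (Set.mem_image_of_mem _ ha)
  · -- norm closedness
    refine isClosed_of_closure_subset ?_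
    intro T hT A hA
    obtain ⟨M, hM0, hMb⟩ := topBOrderBounded_norm_bound hA
    apply relWeaklyCompact_of_approx
    intro ε hε
    obtain ⟨S, hS, hdist⟩ := Metric.mem_closure_iff.mp hT (ε / (M + 1)) (by positivity)
    refine ⟨⇑S '' A, hS A hA, ?_⟩
    rintro x ⟨a, ha, rfl⟩
    refine ⟨S a, Set.mem_image_of_mem _ ha, ?_⟩
    have h1 : ‖T a - S a‖ ≤ ‖T - S‖ * ‖a‖ := by
      have := (T - S).le_opNorm a
      simpa using this
    have h2 : ‖T - S‖ < ε / (M + 1) := by rw [← dist_eq_norm]; exact hdist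
    have h3 : ‖a‖ ≤ M := hMb a ha
    calc ‖T a - S a‖ ≤ ‖T - S‖ * ‖a‖ := h1
    _ ≤ ε / (M + 1) * M := mul_le_mul h2.le h3 (norm_nonneg a) (by positivity)
    _ ≤ ε := by
        rw [div_mul_eq_mul_div, div_le_iff₀ (by linarith)]
        nlinarith
end

section
/- Let E be a locally convex-solid Riesz space such that the canonical embedding E ↪ E′′ into the strong bidual is continuous. Then the strong dual E′ is a KR-space if and only if the strong topology β(E′, E) on E′ is a Lebesgue topology. In particular, the strong dual of a Fréchet lattice is a KR-space if and only if its topology is Lebesgue. -/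
open Filter Topology Set Bornology

/-- The strong dual E' is a KR-space: every increasing (for the dual ordering),
topologically bounded net of positive functionals converges in the strong topology. -/
def DualIsKR (E : Type*) [AddCommGroup E] [Lattice E] [Module ℝ E] [TopologicalSpace E] :
    Prop :=
  ∀ (ι : Type) [Preorder ι] [Nonempty ι] [IsDirected ι (· ≤ ·)] (f : ι → (E →L[ℝ] ℝ)),
    (∀ i j : ι, i ≤ j → DualLE E (f i) (f j)) → (∀ i : ι, PosFunctional E (f i)) →
    IsVonNBounded ℝ (Set.range f) →
    ∃ l : E →L[ℝ] ℝ, Tendsto f atTop (nhds l)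

open Pointwise

set_option linter.unusedSectionVars false

section Aux
variable {E : Type*} [AddCommGroup E] [Lattice E] [Module ℝ E]
  [CovariantClass E E (· + ·) (· ≤ ·)] [PosSMulMono ℝ E]
  [TopologicalSpace E] [IsTopologicalAddGroup E] [ContinuousSMul ℝ E]

lemma aux_abs_apply_le {g : E →L[ℝ] ℝ} (hg : ∀ x : E, 0 ≤ x → 0 ≤ g x) (x : E) :
    |g x| ≤ g |x| := by
  have h1 : g x = g x⁺ - g x⁻ := by
    conv_lhs => rw [← posPart_sub_negPart x]
    exact map_sub g _ _
  have h2 : g |x| = g x⁺ + g x⁻ := by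
    rw [← posPart_add_negPart x]
    exact map_add g _ _
  have hp := hg x⁺ (posPart_nonneg x)
  have hn := hg x⁻ (negPart_nonneg x)
  rw [h1, h2]
  calc |g x⁺ - g x⁻| ≤ |g x⁺| + |g x⁻| := abs_sub _ _
    _ = g x⁺ + g x⁻ := by rw [abs_of_nonneg hp, abs_of_nonneg hn]

lemma aux_smul_le (t : ℝ) (x : E) : t • x ≤ |t| • |x| := by
  rcases le_total 0 t with ht | ht
  · rw [abs_of_nonneg ht]
    exact smul_le_smul_of_nonneg_left (le_abs_self x) ht
  · rw [abs_of_nonpos ht]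
    calc t • x = (-t) • (-x) := by rw [neg_smul, smul_neg, neg_neg]
      _ ≤ (-t) • |x| := smul_le_smul_of_nonneg_left (neg_le_abs x) (by linarith)

lemma aux_abs_smul_le (t : ℝ) (x : E) : |t • x| ≤ |t| • |x| := by
  refine abs_le'.mpr ⟨aux_smul_le t x, ?_⟩
  calc -(t • x) = (-t) • x := by rw [neg_smul]
    _ ≤ |(-t)| • |x| := aux_smul_le (-t) x
    _ = |t| • |x| := by rw [abs_neg]

lemma aux_abs_image_bounded (hE : IsLocallyConvexSolid E) {S : Set E}
    (hS : IsVonNBounded ℝ S) : IsVonNBounded ℝ ((fun x : E => |x|) '' S) := by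
  intro V hV
  obtain ⟨V', ⟨hV'mem, _, hV'solid⟩, hV'sub⟩ := hE.mem_iff.mp hV
  obtain ⟨r, hr⟩ := absorbs_iff_norm.mp (hS hV'mem)
  refine (absorbs_iff_norm.mpr ⟨max r 1, fun c hc => ?_⟩).mono_left hV'sub
  have hc1 : (1:ℝ) ≤ ‖c‖ := le_trans (le_max_right r 1) hc
  have hc0 : c ≠ 0 := by
    intro h; rw [h, norm_zero] at hc1; linarith
  rintro y ⟨x, hxS, rfl⟩
  have hx : x ∈ c • V' := hr c (le_trans (le_max_left r 1) hc) hxS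
  obtain ⟨v, hv, rfl⟩ := hx
  rw [Set.mem_smul_set_iff_inv_smul_mem₀ hc0]
  refine hV'solid v hv _ ?_
  have h2 : |c • v| ≤ |c| • |v| := aux_abs_smul_le _ _
  calc |(c⁻¹ • |c • v|)| ≤ |c⁻¹| • |(|c • v|)| := aux_abs_smul_le _ _
    _ = |c|⁻¹ • |c • v| := by rw [abs_abs, abs_inv]
    _ ≤ |c|⁻¹ • (|c| • |v|) := smul_le_smul_of_nonneg_left h2 (by positivity)
    _ = |v| := by
        rw [smul_smul, inv_mul_cancel₀ (by simpa using hc0), one_smul]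

lemma aux_interval_bounded (hE : IsLocallyConvexSolid E) (h0 : E →L[ℝ] ℝ)
    (hpos : PosFunctional E h0) :
    IsVonNBounded ℝ {g : E →L[ℝ] ℝ | PosFunctional E g ∧ DualLE E g h0} := by
  rw [(ContinuousLinearMap.hasBasis_nhds_zero).isVonNBounded_iff]
  rintro ⟨S, W⟩ ⟨hSb, hW⟩
  obtain ⟨ε, hε, hball⟩ := Metric.mem_nhds_iff.mp hW
  have hT : IsVonNBounded ℝ ((fun x : E => |x|) '' S) := aux_abs_image_bounded hE hSb
  have h1 : IsVonNBounded ℝ (h0 '' ((fun x : E => |x|) '' S)) := hT.image h0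
  obtain ⟨M0, hM0'⟩ := (NormedSpace.isVonNBounded_iff ℝ).mp h1 |>.exists_norm_le
  set M : ℝ := max M0 0 with hMdef
  have hM : ∀ y ∈ ⇑h0 '' ((fun x : E => |x|) '' S), ‖y‖ ≤ M :=
    fun y hy => le_trans (hM0' y hy) (le_max_left _ _)
  have hM0 : 0 ≤ M := le_max_right _ _
  refine absorbs_iff_norm.mpr ⟨(M + 1) / ε, fun c hc => ?_⟩
  have hcpos : 0 < ‖c‖ := lt_of_lt_of_le (div_pos (by linarith) hε) hc
  have hc0 : c ≠ 0 := by simpa using hcpos.ne'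
  rintro g ⟨hgpos, hgle⟩
  rw [Set.mem_smul_set_iff_inv_smul_mem₀ hc0]
  intro x hxS
  refine hball ?_
  have hb1 : |g x| ≤ g |x| := aux_abs_apply_le hgpos x
  have hb2 : g |x| ≤ h0 |x| := hgle |x| (abs_nonneg x)
  have hb3 : h0 |x| ≤ M := le_trans (le_abs_self _) (hM _ ⟨|x|, ⟨x, hxS, rfl⟩, rfl⟩)
  have hgx : |g x| ≤ M := le_trans hb1 (le_trans hb2 hb3)
  have : |(c⁻¹ • g) x| = ‖c‖⁻¹ * |g x| := by
    rw [ContinuousLinearMap.smul_apply, smul_eq_mul, abs_mul, abs_inv, Real.norm_eq_abs]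
  rw [Metric.mem_ball, dist_zero_right, Real.norm_eq_abs, this]
  have hlt : M < ‖c‖ * ε := by
    have h1 : (M + 1) / ε * ε ≤ ‖c‖ * ε := mul_le_mul_of_nonneg_right hc hε.le
    rw [div_mul_cancel₀ _ (ne_of_gt hε)] at h1
    linarith
  calc ‖c‖⁻¹ * |g x| ≤ ‖c‖⁻¹ * M :=
        mul_le_mul_of_nonneg_left hgx (by positivity)
    _ < ε := by
        have h2 : ‖c‖⁻¹ * M < ‖c‖⁻¹ * (‖c‖ * ε) :=
          mul_lt_mul_of_pos_left hlt (by positivity)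
        rwa [← mul_assoc, inv_mul_cancel₀ hcpos.ne', one_mul] at h2

end Aux

section Main
variable {E : Type*} [AddCommGroup E] [Lattice E] [Module ℝ E]
  [CovariantClass E E (· + ·) (· ≤ ·)] [PosSMulMono ℝ E]
  [TopologicalSpace E] [IsTopologicalAddGroup E] [ContinuousSMul ℝ E]

theorem aux_main (hE : IsLocallyConvexSolid E)
    (hequi : ∀ S : Set (E →L[ℝ] ℝ), IsVonNBounded ℝ S → ∀ ε : ℝ, 0 < ε →
      ∃ U ∈ 𝓝 (0:E), ∀ x ∈ U, ∀ g ∈ S, |g x| ≤ ε) :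
    DualIsKR E ↔ DualLebesgue E := by
  constructor
  · -- KR → Lebesgue
    intro hKR ι _ _ _ f hanti hpos hinf
    obtain ⟨i₀⟩ := (inferInstance : Nonempty ι)
    let ι' := {i : ι // i₀ ≤ i}
    haveI : Nonempty ι' := ⟨⟨i₀, le_refl i₀⟩⟩
    haveI : IsDirected ι' (· ≤ ·) := by
      constructor
      rintro ⟨i, hi⟩ ⟨j, hj⟩
      obtain ⟨k, hik, hjk⟩ := directed_of (· ≤ ·) i j
      exact ⟨⟨k, le_trans hi hik⟩, hik, hjk⟩
    set g : ι' → (E →L[ℝ] ℝ) := fun i => f i₀ - f i.1 with hgdef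
    have hgmono : ∀ i j : ι', i ≤ j → DualLE E (g i) (g j) := by
      intro i j hij x hx
      simp only [hgdef, ContinuousLinearMap.sub_apply]
      have := hanti i.1 j.1 hij x hx
      linarith
    have hgpos : ∀ i : ι', PosFunctional E (g i) := by
      intro i x hx
      simp only [hgdef, ContinuousLinearMap.sub_apply]
      have := hanti i₀ i.1 i.2 x hx
      linarith
    have hgbdd : IsVonNBounded ℝ (Set.range g) := by
      refine (aux_interval_bounded hE (f i₀) ?_).subset ?_
      · intro x hx
        have := hpos i₀ x hx
        simpa using this
      · rintro - ⟨i, rfl⟩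
        refine ⟨hgpos i, fun x hx => ?_⟩
        simp only [hgdef, ContinuousLinearMap.sub_apply]
        have h1 := hpos i.1 x hx
        simp only [ContinuousLinearMap.zero_apply] at h1
        linarith
    obtain ⟨m', hm'⟩ := hKR ι' g hgmono hgpos hgbdd
    set m : E →L[ℝ] ℝ := f i₀ - m' with hmdef
    have hfm : Tendsto (fun i : ι' => f i.1) atTop (𝓝 m) := by
      have : Tendsto (fun i : ι' => f i₀ - g i) atTop (𝓝 (f i₀ - m')) :=
        tendsto_const_nhds.sub hm'
      refine this.congr fun i => ?_
      simp [hgdef]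
    have hev : ∀ x : E, Tendsto (fun i : ι' => f i.1 x) atTop (𝓝 (m x)) :=
      fun x => ((continuous_eval_const x).tendsto m).comp hfm
    have hm0 : m = 0 := by
      ext x
      rw [ContinuousLinearMap.zero_apply]
      have key : ∀ y : E, 0 ≤ y → m y = 0 := by
        intro y hy
        have h1 : 0 ≤ m y := by
          refine ge_of_tendsto (hev y) (Eventually.of_forall fun i => ?_)
          have := hpos i.1 y hy
          simpa using this
        have h2 : DualLE E m 0 := by
          refine hinf m fun i => ?_
          intro z hz
          obtain ⟨k, hk1, hk2⟩ := directed_of (· ≤ ·) i i₀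
          refine le_of_tendsto (hev z) ?_
          rw [eventually_atTop]
          refine ⟨⟨k, hk2⟩, fun j hj => ?_⟩
          exact le_trans (hanti k j.1 hj z hz) (hanti i k hk1 z hz)
        have := h2 y hy
        simp only [ContinuousLinearMap.zero_apply] at this
        linarith
      have hx : m x = m x⁺ - m x⁻ := by
        conv_lhs => rw [← posPart_sub_negPart x]
        exact map_sub m _ _
      rw [hx, key _ (posPart_nonneg x), key _ (negPart_nonneg x), sub_zero]
    rw [hm0] at hfm
    rw [tendsto_def]
    intro U hU
    have hmem := hfm hU
    rw [mem_map, mem_atTop_sets] at hmem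
    rw [mem_atTop_sets]
    obtain ⟨i₁, hi₁⟩ := hmem
    refine ⟨i₁.1, fun j hj => ?_⟩
    exact hi₁ ⟨j, le_trans i₁.2 hj⟩ hj
  · -- Lebesgue → KR
    intro hLeb ι _ _ _ f hmono hpos hbdd
    -- pointwise limit
    have hbddpt : ∀ x : E, BddAbove (Set.range fun i => f i x) := by
      intro x
      have h1 : IsVonNBounded ℝ ((fun g : E →L[ℝ] ℝ => g x) '' (Set.range f)) := by
        have := hbdd.image (canonEmbed E x)
        simpa [canonEmbed] using this
      have h2 := ((NormedSpace.isVonNBounded_iff ℝ).mp h1).bddAbove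
      refine h2.mono ?_
      rintro - ⟨i, rfl⟩
      exact ⟨f i, ⟨i, rfl⟩, rfl⟩
    have hex : ∀ x : E, ∃ r : ℝ, Tendsto (fun i => f i x) atTop (𝓝 r) := by
      intro x
      have hp : Tendsto (fun i => f i x⁺) atTop (𝓝 (⨆ i, f i x⁺)) :=
        tendsto_atTop_ciSup (fun i j hij => hmono i j hij x⁺ (posPart_nonneg x)) (hbddpt x⁺)
      have hn : Tendsto (fun i => f i x⁻) atTop (𝓝 (⨆ i, f i x⁻)) :=
        tendsto_atTop_ciSup (fun i j hij => hmono i j hij x⁻ (negPart_nonneg x)) (hbddpt x⁻)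
      refine ⟨(⨆ i, f i x⁺) - ⨆ i, f i x⁻, ?_⟩
      have := hp.sub hn
      refine this.congr fun i => ?_
      rw [← map_sub, posPart_sub_negPart]
    choose L hL using hex
    have hLlin : ∀ (x y : E), L (x + y) = L x + L y := by
      intro x y
      refine tendsto_nhds_unique ?_ ((hL x).add (hL y))
      refine (hL (x + y)).congr fun i => ?_
      rw [map_add]
    have hLsmul : ∀ (c : ℝ) (x : E), L (c • x) = c * L x := by
      intro c x
      refine tendsto_nhds_unique ?_ ((hL x).const_mul c)
      refine (hL (c • x)).congr fun i => ?_
      rw [map_smul, smul_eq_mul]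
    set L₀ : E →ₗ[ℝ] ℝ :=
      { toFun := L
        map_add' := hLlin
        map_smul' := fun c x => by simpa using hLsmul c x } with hL₀def
    have hL00 : L₀ 0 = 0 := map_zero L₀
    have hLcont : Continuous L₀ := by
      refine continuous_of_continuousAt_zero L₀ ?_
      rw [ContinuousAt, hL00, Metric.tendsto_nhds]
      intro ε hε
      obtain ⟨U, hU, hUε⟩ := hequi (Set.range f) hbdd (ε / 2) (by linarith)
      rw [eventually_iff_exists_mem]
      refine ⟨U, hU, fun x hx => ?_⟩
      have h1 : ∀ i, |f i x| ≤ ε / 2 := fun i => hUε x hx (f i) ⟨i, rfl⟩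
      have h2 : |L x| ≤ ε / 2 := by
        have habs : Tendsto (fun i => |f i x|) atTop (𝓝 |L x|) := (hL x).abs
        exact le_of_tendsto habs (Eventually.of_forall h1)
      rw [Real.dist_eq, sub_zero]
      calc |L₀ x| = |L x| := rfl
        _ ≤ ε / 2 := h2
        _ < ε := by linarith
    set Lc : E →L[ℝ] ℝ := ⟨L₀, hLcont⟩ with hLcdef
    refine ⟨Lc, ?_⟩
    have hLeb' := hLeb ι (fun i => Lc - f i) ?_ ?_ ?_
    · have : Tendsto (fun i => Lc - (Lc - f i)) atTop (𝓝 (Lc - 0)) :=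
        tendsto_const_nhds.sub hLeb'
      rw [sub_zero] at this
      refine this.congr fun i => ?_
      simp
    · intro i j hij x hx
      simp only [ContinuousLinearMap.sub_apply]
      have := hmono i j hij x hx
      linarith
    · intro i x hx
      simp only [ContinuousLinearMap.sub_apply, ContinuousLinearMap.zero_apply]
      have h1 : f i x ≤ L x := by
        refine ge_of_tendsto (hL x) ?_
        rw [eventually_atTop]
        exact ⟨i, fun j hj => hmono i j hj x hx⟩
      have : Lc x = L x := rfl
      linarith
    · intro g hg x hx
      have h1 : ∀ i, g x ≤ L x - f i x := by
        intro i
        have := hg i x hx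
        simp only [ContinuousLinearMap.sub_apply] at this
        have h2 : Lc x = L x := rfl
        linarith
      have h2 : Tendsto (fun i => L x - f i x) atTop (𝓝 0) := by
        have h3 : Tendsto (fun i => L x - f i x) atTop (𝓝 (L x - L x)) :=
          (tendsto_const_nhds (x := L x)).sub (hL x)
        simpa using h3
      have := ge_of_tendsto h2 (Eventually.of_forall h1)
      simpa using this

end Main

section Equi
variable {E : Type*} [AddCommGroup E] [Lattice E] [Module ℝ E]
  [TopologicalSpace E] [IsTopologicalAddGroup E] [ContinuousSMul ℝ E]

lemma aux_hequi_of_canonEmbed (hcont : Continuous fun x : E => canonEmbed E x) :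
    ∀ S : Set (E →L[ℝ] ℝ), IsVonNBounded ℝ S → ∀ ε : ℝ, 0 < ε →
      ∃ U ∈ 𝓝 (0:E), ∀ x ∈ U, ∀ g ∈ S, |g x| ≤ ε := by
  intro S hS ε hε
  have hN : {ψ : (E →L[ℝ] ℝ) →L[ℝ] ℝ | ∀ g ∈ S, ψ g ∈ Metric.closedBall (0:ℝ) ε} ∈
      𝓝 (0 : (E →L[ℝ] ℝ) →L[ℝ] ℝ) :=
    ContinuousLinearMap.hasBasis_nhds_zero.mem_of_mem
      (i := (S, Metric.closedBall (0:ℝ) ε)) ⟨hS, Metric.closedBall_mem_nhds 0 hε⟩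
  have h0 : canonEmbed E (0:E) = 0 := by
    ext g
    show g 0 = 0
    exact map_zero g
  have hca := hcont.continuousAt (x := (0:E))
  rw [ContinuousAt, h0] at hca
  have hU := hca hN
  refine ⟨_, hU, fun x hx g hg => ?_⟩
  have : canonEmbed E x g ∈ Metric.closedBall (0:ℝ) ε := hx g hg
  rw [Metric.mem_closedBall, dist_zero_right, Real.norm_eq_abs] at this
  exact this

end Equi

section Frechet
variable {G : Type} [AddCommGroup G] [Lattice G] [Module ℝ G]
  [UniformSpace G] [IsUniformAddGroup G] [ContinuousSMul ℝ G]
  [CompleteSpace G] [TopologicalSpace.MetrizableSpace G]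

lemma aux_hequi_frechet :
    ∀ S : Set (G →L[ℝ] ℝ), IsVonNBounded ℝ S → ∀ ε : ℝ, 0 < ε →
      ∃ U ∈ 𝓝 (0:G), ∀ x ∈ U, ∀ g ∈ S, |g x| ≤ ε := by
  haveI : (uniformity G).IsCountablyGenerated := by
    rw [uniformity_eq_comap_nhds_zero G]
    haveI : (𝓝 (0:G)).IsCountablyGenerated := by
      haveI : TopologicalSpace.PseudoMetrizableSpace G :=
        TopologicalSpace.MetrizableSpace.toPseudoMetrizableSpace
      infer_instance
    infer_instance
  letI : PseudoMetricSpace G := UniformSpace.pseudoMetricSpace G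
  haveI : BaireSpace G := inferInstance
  haveI : BarrelledSpace ℝ G := inferInstance
  intro S hS ε hε
  have H : ∀ (k : Fin 1) (x : G),
      BddAbove (Set.range fun i : S => (fun _ : Fin 1 => normSeminorm ℝ ℝ) k ((i : G →L[ℝ] ℝ) x)) := by
    intro k x
    have h1 : IsVonNBounded ℝ ((fun g : G →L[ℝ] ℝ => g x) '' S) := by
      have := hS.image (canonEmbed G x)
      simpa [canonEmbed] using this
    obtain ⟨M, hM⟩ := ((NormedSpace.isVonNBounded_iff ℝ).mp h1).exists_norm_le
    refine ⟨M, ?_⟩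
    rintro - ⟨i, rfl⟩
    exact hM _ ⟨i.1, i.2, rfl⟩
  have hequi : UniformEquicontinuous ((↑) ∘ (fun i : S => (i : G →L[ℝ] ℝ))) :=
    (norm_withSeminorms ℝ ℝ).banach_steinhaus H
  have hec : EquicontinuousAt ((↑) ∘ (fun i : S => (i : G →L[ℝ] ℝ))) 0 :=
    hequi.equicontinuous 0
  have hUmem : {p : ℝ × ℝ | dist p.1 p.2 < ε} ∈ uniformity ℝ := Metric.dist_mem_uniformity hε
  have := hec _ hUmem
  rw [eventually_iff_exists_mem] at this
  obtain ⟨U, hU, hUP⟩ := this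
  refine ⟨U, hU, fun x hx g hg => ?_⟩
  have h := hUP x hx ⟨g, hg⟩
  have h2 : dist (g (0:G)) (g x) < ε := h
  rw [map_zero, Real.dist_eq] at h2
  have h3 : |g x| < ε := by
    rw [abs_sub_comm] at h2
    simpa using h2
  linarith

end Frechet


/-- If the canonical embedding E ↪ E'' of a locally convex-solid Riesz
space is continuous, then E' is a KR-space iff β(E',E) is Lebesgue; in particular, the
strong dual of a Fréchet lattice is a KR-space iff its topology is Lebesgue. -/
theorem dual_KR_iff_dual_lebesgue
    {E : Type*} [AddCommGroup E] [Lattice E] [Module ℝ E]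
    [CovariantClass E E (· + ·) (· ≤ ·)] [PosSMulMono ℝ E]
    [TopologicalSpace E] [IsTopologicalAddGroup E] [ContinuousSMul ℝ E] [T2Space E]
    (hE : IsLocallyConvexSolid E)
    (hcont : Continuous fun x : E => canonEmbed E x) :
    (DualIsKR E ↔ DualLebesgue E) ∧
    ∀ (G : Type) [AddCommGroup G] [Lattice G] [Module ℝ G]
      [CovariantClass G G (· + ·) (· ≤ ·)] [PosSMulMono ℝ G]
      [UniformSpace G] [IsUniformAddGroup G] [ContinuousSMul ℝ G]
      [CompleteSpace G] [TopologicalSpace.MetrizableSpace G],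
      IsLocallyConvexSolid G → (DualIsKR G ↔ DualLebesgue G) := by
  refine ⟨aux_main hE (aux_hequi_of_canonEmbed hcont), ?_⟩
  intro G _ _ _ _ _ _ _ _ _ _ hG
  exact aux_main hG aux_hequi_frechet
end

section
/- The norm dual E′ of a Banach lattice E is a KB-space if and only if the norm of E′ is order continuous. -/
open Filter Topology Set Bornology

section Aux

variable {E : Type*} [NormedAddCommGroup E] [Lattice E] [HasSolidNorm E] [IsOrderedAddMonoid E]
  [NormedSpace ℝ E]

private lemma posfun_mono {f : E →L[ℝ] ℝ} (hf : PosFunctional E f) {x y : E}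
    (h : x ≤ y) : f x ≤ f y := by
  have h0 : 0 ≤ f (y - x) := hf _ (by simpa using h)
  rw [map_sub] at h0; linarith

private lemma posfun_abs_le {f : E →L[ℝ] ℝ} (hf : PosFunctional E f) (x : E) :
    |f x| ≤ f |x| := by
  have h1 : f x ≤ f |x| := posfun_mono hf (le_abs_self x)
  have h2 : f (-x) ≤ f |x| := posfun_mono hf (neg_le_abs x)
  rw [map_neg] at h2
  exact abs_le.2 ⟨by linarith, h1⟩

private lemma posfun_norm_mono {f g : E →L[ℝ] ℝ} (hf : PosFunctional E f)
    (hfg : DualLE E f g) : ‖f‖ ≤ ‖g‖ := by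
  refine f.opNorm_le_bound (norm_nonneg g) fun x => ?_
  calc ‖f x‖ = |f x| := Real.norm_eq_abs _
    _ ≤ f |x| := posfun_abs_le hf x
    _ ≤ g |x| := hfg _ (abs_nonneg x)
    _ ≤ ‖g |x|‖ := le_abs_self _
    _ ≤ ‖g‖ * ‖|x|‖ := g.le_opNorm _
    _ = ‖g‖ * ‖x‖ := by rw [norm_abs_eq_norm]

private lemma posfun_exists_apply {f : E →L[ℝ] ℝ} (hf : PosFunctional E f) {c : ℝ}
    (hc : c < ‖f‖) : ∃ x : E, 0 ≤ x ∧ ‖x‖ ≤ 1 ∧ c < f x := by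
  obtain ⟨y, hy1, hy2⟩ := f.exists_lt_apply_of_lt_opNorm hc
  refine ⟨|y|, abs_nonneg y, by rw [norm_abs_eq_norm]; exact hy1.le, ?_⟩
  calc c < ‖f y‖ := hy2
    _ = |f y| := Real.norm_eq_abs _
    _ ≤ f |y| := posfun_abs_le hf y

end Aux

/-- The norm dual E' of a Banach lattice E is a KB-space iff the norm of
E' is order continuous. -/
theorem dual_KB_iff_dual_orderContinuous
    {E : Type*} [NormedAddCommGroup E] [Lattice E] [HasSolidNorm E] [IsOrderedAddMonoid E]
    [NormedSpace ℝ E] [PosSMulMono ℝ E]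
    [CompleteSpace E] :
    (∀ f : ℕ → (E →L[ℝ] ℝ), (∀ n m : ℕ, n ≤ m → DualLE E (f n) (f m)) →
      (∀ n : ℕ, PosFunctional E (f n)) → (∃ C : ℝ, ∀ n, ‖f n‖ ≤ C) →
      ∃ l : E →L[ℝ] ℝ, Tendsto f atTop (nhds l)) ↔ DualLebesgue E := by
  constructor
  · -- KB implies order continuous dual norm
    intro hKB ι _ _ _ f hdec hpos hinf
    obtain ⟨i₀⟩ := (inferInstance : Nonempty ι)
    have hanti : ∀ x : E, 0 ≤ x → Antitone fun i => f i x := fun x hx i j hij =>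
      hdec i j hij x hx
    have hbddB : ∀ x : E, 0 ≤ x → BddBelow (Set.range fun i => f i x) := fun x hx =>
      ⟨0, by rintro r ⟨i, rfl⟩; exact hpos i x hx⟩
    set φ : E → ℝ := fun x => (⨅ i, f i x⁺) - (⨅ i, f i x⁻) with hφdef
    have htd : ∀ x : E, Tendsto (fun i => f i x) atTop (𝓝 (φ x)) := by
      intro x
      have h1 := tendsto_atTop_ciInf (hanti _ (posPart_nonneg x)) (hbddB _ (posPart_nonneg x))
      have h2 := tendsto_atTop_ciInf (hanti _ (negPart_nonneg x)) (hbddB _ (negPart_nonneg x))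
      have hx : ∀ i, f i x = f i x⁺ - f i x⁻ := fun i => by
        rw [← map_sub, posPart_sub_negPart]
      simp only [hφdef]
      simp only [funext hx]
      exact h1.sub h2
    have hφbound : ∀ x : E, |φ x| ≤ ‖f i₀‖ * ‖x‖ := by
      intro x
      refine le_of_tendsto (htd x).abs ?_
      filter_upwards [eventually_ge_atTop i₀] with i hi
      calc |f i x| ≤ f i |x| := posfun_abs_le (hpos i) x
        _ ≤ f i₀ |x| := hdec i₀ i hi _ (abs_nonneg x)
        _ ≤ ‖f i₀ |x|‖ := le_abs_self _
        _ ≤ ‖f i₀‖ * ‖|x|‖ := (f i₀).le_opNorm _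
        _ = ‖f i₀‖ * ‖x‖ := by rw [norm_abs_eq_norm]
    obtain ⟨g, hg⟩ : ∃ g : E →L[ℝ] ℝ, ∀ x, g x = φ x := by
      refine ⟨LinearMap.mkContinuous
        { toFun := φ
          map_add' := fun x y => tendsto_nhds_unique (htd (x + y))
            (by simpa only [map_add] using (htd x).add (htd y))
          map_smul' := fun c x => tendsto_nhds_unique (htd (c • x))
            (by simpa only [map_smul, smul_eq_mul, RingHom.id_apply]
              using (htd x).const_mul c) }
        ‖f i₀‖ (fun x => by rw [Real.norm_eq_abs]; exact hφbound x), fun x => rfl⟩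
    have hg_lb : ∀ i, DualLE E g (f i) := by
      intro i x hx
      rw [hg]
      refine le_of_tendsto (htd x) ?_
      filter_upwards [eventually_ge_atTop i] with j hj
      exact hdec i j hj x hx
    have hφ0 : ∀ x : E, 0 ≤ x → φ x = 0 := by
      intro x hx
      have h1 : φ x ≤ 0 := by
        have := hinf g hg_lb x hx
        rw [hg] at this; simpa using this
      have h2 : 0 ≤ φ x :=
        ge_of_tendsto (htd x) (Eventually.of_forall fun i => hpos i x hx)
      linarith
    have hzero : ∀ x : E, 0 ≤ x → Tendsto (fun i => f i x) atTop (𝓝 0) := fun x hx =>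
      hφ0 x hx ▸ htd x
    have hnormmono : ∀ i j : ι, i ≤ j → ‖f j‖ ≤ ‖f i‖ := fun i j hij =>
      posfun_norm_mono (hpos j) (hdec i j hij)
    suffices hsm : ∀ ε > (0 : ℝ), ∃ i, ‖f i‖ < ε by
      rw [← tendsto_sub_nhds_zero_iff]
      simp only [sub_zero]
      rw [NormedAddCommGroup.tendsto_nhds_zero]
      intro ε hε
      obtain ⟨i₁, hi₁⟩ := hsm ε hε
      filter_upwards [eventually_ge_atTop i₁] with j hj
      exact lt_of_le_of_lt (hnormmono i₁ j hj) hi₁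
    by_contra hc
    push_neg at hc
    obtain ⟨ε, hε, hlow⟩ := hc
    have hX : ∀ i : ι, ∃ x : E, 0 ≤ x ∧ ‖x‖ ≤ 1 ∧ ε / 2 < f i x := fun i =>
      posfun_exists_apply (hpos i) (lt_of_lt_of_le (by linarith) (hlow i))
    choose X hX0 hX1 hX2 using hX
    have hN : ∀ i : ι, ∃ j : ι, i ≤ j ∧ f j (X i) < ε / 4 := by
      intro i
      have hev : ∀ᶠ j in (atTop : Filter ι), f j (X i) < ε / 4 :=
        (hzero (X i) (hX0 i)).eventually_lt_const (by linarith)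
      obtain ⟨j, hj1, hj2⟩ := (hev.and (eventually_ge_atTop i)).exists
      exact ⟨j, hj2, hj1⟩
    choose N hN1 hN2 using hN
    set idx : ℕ → ι := fun n => N^[n] i₀ with hidxdef
    have idx_succ : ∀ n, idx (n + 1) = N (idx n) := fun n =>
      Function.iterate_succ_apply' N n i₀
    have idx_mono : Monotone idx := monotone_nat_of_le_succ fun n => by
      rw [idx_succ]; exact hN1 _
    obtain ⟨l, hl⟩ := hKB (fun n => f (idx 0) - f (idx n))
      (fun n m hnm x hx => by
        simp only [ContinuousLinearMap.sub_apply]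
        have := hdec (idx n) (idx m) (idx_mono hnm) x hx
        linarith)
      (fun n x hx => by
        simp only [ContinuousLinearMap.sub_apply]
        have := hdec (idx 0) (idx n) (idx_mono (Nat.zero_le n)) x hx
        linarith)
      ⟨2 * ‖f (idx 0)‖, fun n => by
        calc ‖f (idx 0) - f (idx n)‖ ≤ ‖f (idx 0)‖ + ‖f (idx n)‖ := norm_sub_le _ _
          _ ≤ 2 * ‖f (idx 0)‖ := by
            have := hnormmono (idx 0) (idx n) (idx_mono (Nat.zero_le n)); linarith⟩
    have hdiff : Tendsto (fun n => f (idx n) - f (idx (n + 1))) atTop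
        (𝓝 (0 : E →L[ℝ] ℝ)) := by
      have h1 : Tendsto (fun n => (f (idx 0) - f (idx (n + 1))) -
          (f (idx 0) - f (idx n))) atTop (𝓝 (l - l)) :=
        (hl.comp (tendsto_add_atTop_nat 1)).sub hl
      rw [sub_self] at h1
      have h2 : ∀ n, (f (idx 0) - f (idx (n + 1))) - (f (idx 0) - f (idx n)) =
          f (idx n) - f (idx (n + 1)) := fun n => by abel
      simpa only [h2] using h1
    have hge : ∀ n, ε / 4 ≤ ‖f (idx n) - f (idx (n + 1))‖ := by
      intro n
      have h1 : ε / 2 < f (idx n) (X (idx n)) := hX2 _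
      have h2 : f (idx (n + 1)) (X (idx n)) < ε / 4 := by rw [idx_succ]; exact hN2 _
      have h3 : ε / 4 ≤ (f (idx n) - f (idx (n + 1))) (X (idx n)) := by
        simp only [ContinuousLinearMap.sub_apply]; linarith
      calc ε / 4 ≤ (f (idx n) - f (idx (n + 1))) (X (idx n)) := h3
        _ ≤ ‖(f (idx n) - f (idx (n + 1))) (X (idx n))‖ := le_abs_self _
        _ ≤ ‖f (idx n) - f (idx (n + 1))‖ * ‖X (idx n)‖ :=
          ContinuousLinearMap.le_opNorm _ _
        _ ≤ ‖f (idx n) - f (idx (n + 1))‖ * 1 := by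
          gcongr
          exact hX1 _
        _ = ‖f (idx n) - f (idx (n + 1))‖ := mul_one _
    have hsmall : ∀ᶠ n in (atTop : Filter ℕ),
        ‖f (idx n) - f (idx (n + 1))‖ < ε / 4 :=
      hdiff.norm.eventually_lt_const (by simpa using (by linarith : (0:ℝ) < ε / 4))
    obtain ⟨n, hn⟩ := hsmall.exists
    exact absurd (hge n) (not_le.2 hn)
  · -- order continuous dual norm implies KB
    intro hDL f hinc hpos hbdd
    obtain ⟨C, hC⟩ := hbdd
    have hC0 : 0 ≤ C := le_trans (norm_nonneg (f 0)) (hC 0)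
    have hmono : ∀ x : E, 0 ≤ x → Monotone fun n => f n x := fun x hx n m hnm =>
      hinc n m hnm x hx
    have hbddA : ∀ x : E, 0 ≤ x → BddAbove (Set.range fun n => f n x) := by
      intro x hx
      refine ⟨C * ‖x‖, ?_⟩
      rintro r ⟨n, rfl⟩
      calc f n x ≤ |f n x| := le_abs_self _
        _ ≤ f n |x| := posfun_abs_le (hpos n) x
        _ ≤ ‖f n |x|‖ := le_abs_self _
        _ ≤ ‖f n‖ * ‖|x|‖ := (f n).le_opNorm _
        _ ≤ C * ‖x‖ := by rw [norm_abs_eq_norm]; gcongr; exact hC n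
    set ψ : E → ℝ := fun x => (⨆ n, f n x⁺) - (⨆ n, f n x⁻) with hψdef
    have htd : ∀ x : E, Tendsto (fun n => f n x) atTop (𝓝 (ψ x)) := by
      intro x
      have h1 := tendsto_atTop_ciSup (hmono _ (posPart_nonneg x)) (hbddA _ (posPart_nonneg x))
      have h2 := tendsto_atTop_ciSup (hmono _ (negPart_nonneg x)) (hbddA _ (negPart_nonneg x))
      have hx : ∀ n, f n x = f n x⁺ - f n x⁻ := fun n => by
        rw [← map_sub, posPart_sub_negPart]
      simp only [hψdef]
      simp only [funext hx]
      exact h1.sub h2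
    have hψbound : ∀ x : E, |ψ x| ≤ C * ‖x‖ := by
      intro x
      refine le_of_tendsto (htd x).abs (Eventually.of_forall fun n => ?_)
      calc |f n x| ≤ f n |x| := posfun_abs_le (hpos n) x
        _ ≤ ‖f n |x|‖ := le_abs_self _
        _ ≤ ‖f n‖ * ‖|x|‖ := (f n).le_opNorm _
        _ ≤ C * ‖x‖ := by rw [norm_abs_eq_norm]; gcongr; exact hC n
    obtain ⟨l, hlapp⟩ : ∃ l : E →L[ℝ] ℝ, ∀ x, l x = ψ x := by
      refine ⟨LinearMap.mkContinuous
        { toFun := ψ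
          map_add' := fun x y => tendsto_nhds_unique (htd (x + y))
            (by simpa only [map_add] using (htd x).add (htd y))
          map_smul' := fun c x => tendsto_nhds_unique (htd (c • x))
            (by simpa only [map_smul, smul_eq_mul, RingHom.id_apply]
              using (htd x).const_mul c) }
        C (fun x => by rw [Real.norm_eq_abs]; exact hψbound x), fun x => rfl⟩
    have hkey := hDL ℕ (fun n => l - f n)
      (fun n m hnm x hx => by
        simp only [ContinuousLinearMap.sub_apply]
        have := hinc n m hnm x hx
        linarith)
      (fun n x hx => by
        simp only [ContinuousLinearMap.zero_apply, ContinuousLinearMap.sub_apply, hlapp]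
        have : f n x ≤ ψ x := by
          refine ge_of_tendsto (htd x) ?_
          filter_upwards [eventually_ge_atTop n] with m hm
          exact hinc n m hm x hx
        linarith)
      (fun h hh x hx => by
        have h1 : ∀ n : ℕ, h x ≤ ψ x - f n x := fun n => by
          have := hh n x hx
          simpa only [ContinuousLinearMap.sub_apply, hlapp] using this
        have h2 : Tendsto (fun n => ψ x - f n x) atTop (𝓝 0) := by
          have := (tendsto_const_nhds (x := ψ x) (f := atTop (α := ℕ))).sub (htd x)
          rwa [sub_self] at this
        have h3 : h x ≤ 0 := ge_of_tendsto h2 (Eventually.of_forall h1)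
        simpa using h3)
    refine ⟨l, ?_⟩
    have h4 : Tendsto (fun n => l - (l - f n)) atTop (𝓝 (l - 0)) :=
      tendsto_const_nhds.sub hkey
    simpa [sub_sub_cancel] using h4
end

section
/- Let T : E → X be a continuous operator from a locally convex-solid Riesz space into a Banach space such that T has the SPIB property, and define q_T(x) = sup{‖Ty‖ : |y| ≤ |x|} for x ∈ E. Then there exists a constant c > 0 such that q_T(x) ≤ c ‖Tx‖ for every positive x ∈ E. -/
open Filter Topology Set Bornology

section AuxSPIB
open Pointwise
set_option linter.unusedSectionVars false

variable {E : Type*} [AddCommGroup E] [Lattice E] [Module ℝ E]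
  [CovariantClass E E (· + ·) (· ≤ ·)] [PosSMulMono ℝ E]

private lemma my_abs_eq (z : E) : |z| = z ⊔ -z := rfl

private lemma my_smul_sup_le {t : ℝ} (ht : 0 < t) (a b : E) :
    t • (a ⊔ b) ≤ t • a ⊔ t • b := by
  have h1 : a ≤ t⁻¹ • (t • a ⊔ t • b) := by
    conv_lhs => rw [← inv_smul_smul₀ ht.ne' a]
    exact smul_le_smul_of_nonneg_left le_sup_left (by positivity)
  have h2 : b ≤ t⁻¹ • (t • a ⊔ t • b) := by
    conv_lhs => rw [← inv_smul_smul₀ ht.ne' b]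
    exact smul_le_smul_of_nonneg_left le_sup_right (by positivity)
  have := smul_le_smul_of_nonneg_left (sup_le h1 h2) ht.le
  rwa [smul_inv_smul₀ ht.ne'] at this

private lemma my_abs_smul_pos {t : ℝ} (ht : 0 < t) (x : E) : |t • x| = t • |x| := by
  rw [my_abs_eq, my_abs_eq, ← smul_neg]
  apply le_antisymm
  · exact sup_le (smul_le_smul_of_nonneg_left le_sup_left ht.le)
      (smul_le_smul_of_nonneg_left le_sup_right ht.le)
  · exact my_smul_sup_le ht x (-x)

private lemma my_abs_smul (t : ℝ) (x : E) : |t • x| = |t| • |x| := by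
  rcases lt_trichotomy t 0 with h | rfl | h
  · have : t • x = (-t) • (-x) := by rw [neg_smul, smul_neg, neg_neg]
    rw [this, my_abs_smul_pos (neg_pos.mpr h), abs_neg, abs_of_neg h]
  · simp
  · rw [my_abs_smul_pos h, abs_of_pos h]

private lemma my_solid_bounded [TopologicalSpace E]
    (hE : IsLocallyConvexSolid E) {u v : ℕ → E}
    (hu : ∀ n, 0 ≤ u n) (huv : ∀ n, |v n| ≤ u n)
    (hb : Bornology.IsVonNBounded ℝ (Set.range u)) :
    Bornology.IsVonNBounded ℝ (Set.range v) := by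
  intro V hV
  obtain ⟨W, ⟨hW, _, hWs⟩, hWV⟩ := hE.mem_iff.mp hV
  have habs := hb hW
  filter_upwards [habs, eventually_ne_cobounded (0 : ℝ)] with a ha hane
  rintro _ ⟨n, rfl⟩
  obtain ⟨w, hw, hwe⟩ := ha ⟨n, rfl⟩
  have hinv : a⁻¹ • v n ∈ W := by
    apply hWs w hw
    have hwabs : |w| = |a⁻¹| • u n := by
      have : w = a⁻¹ • u n := by rw [← hwe, inv_smul_smul₀ hane]
      rw [this, my_abs_smul, abs_of_nonneg (hu n)]
    rw [hwabs, my_abs_smul]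
    exact smul_le_smul_of_nonneg_left (huv n) (abs_nonneg _)
  have : v n ∈ a • W := ⟨a⁻¹ • v n, hinv, by simp [smul_inv_smul₀ hane]⟩
  exact Set.smul_set_mono hWV this

end AuxSPIB

/-- For a continuous operator T with the SPIB property, from a locally
convex-solid Riesz space into a Banach space, with q_T(x) = sup {‖Ty‖ : |y| ≤ |x|},
there is c > 0 such that q_T(x) ≤ c ‖Tx‖ for every positive x. -/
theorem qT_le_of_SPIB
    {E : Type*} [AddCommGroup E] [Lattice E] [Module ℝ E]
    [CovariantClass E E (· + ·) (· ≤ ·)] [PosSMulMono ℝ E]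
    [TopologicalSpace E] [IsTopologicalAddGroup E] [ContinuousSMul ℝ E] [T2Space E]
    (hE : IsLocallyConvexSolid E)
    {X : Type*} [NormedAddCommGroup X] [NormedSpace ℝ X] [CompleteSpace X]
    (T : E →ₗ[ℝ] X) (hTc : Continuous ⇑T) (hSPIB : HasSPIB ⇑T)
    (qT : E → ℝ)
    (hqT : ∀ x : E, qT x = sSup ((fun y : E => ‖T y‖) '' {y : E | |y| ≤ |x|})) :
    ∃ c : ℝ, 0 < c ∧ ∀ x : E, 0 ≤ x → qT x ≤ c * ‖T x‖ := by
  by_contra hcon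
  push_neg at hcon
  -- for each n, get x with 0 ≤ x and (n+1)^2 * ‖T x‖ < qT x
  have hstep : ∀ n : ℕ, ∃ u : E, ∃ v : E, 0 ≤ u ∧ |v| ≤ u ∧
      ‖T u‖ ≤ 1 ∧ (n : ℝ) + 1 ≤ ‖T v‖ := by
    intro n
    obtain ⟨x, hx, hlt⟩ := hcon (((n : ℝ) + 1) ^ 2) (by positivity)
    rw [hqT x] at hlt
    set S := (fun y : E => ‖T y‖) '' {y : E | |y| ≤ |x|} with hS
    have hSne : S.Nonempty := ⟨‖T 0‖, 0, by simpa using abs_nonneg x, rfl⟩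
    obtain ⟨b, hbS, hblt⟩ := exists_lt_of_lt_csSup hSne hlt
    obtain ⟨y, hy, rfl⟩ := hbS
    have hy' : |y| ≤ x := by rwa [abs_of_nonneg hx] at hy
    have hTy : 0 < ‖T y‖ := lt_of_le_of_lt (by positivity) hblt
    set t : ℝ := ((n : ℝ) + 1) / ‖T y‖ with htdef
    have ht : 0 < t := by positivity
    refine ⟨t • x, t • y, smul_nonneg ht.le hx, ?_, ?_, ?_⟩
    · rw [my_abs_smul_pos ht]
      exact smul_le_smul_of_nonneg_left hy' ht.le
    · rw [map_smul, norm_smul, Real.norm_eq_abs, abs_of_pos ht]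
      have h1 : t * ‖T x‖ ≤ t * (‖T y‖ / ((n : ℝ) + 1) ^ 2) := by
        apply mul_le_mul_of_nonneg_left _ ht.le
        rw [le_div_iff₀ (by positivity)]
        linarith [hblt]
      have h2 : t * (‖T y‖ / ((n : ℝ) + 1) ^ 2) = 1 / ((n : ℝ) + 1) := by
        field_simp [htdef]
        rw [htdef, div_mul_cancel₀ _ hTy.ne']
      have h3 : (1 : ℝ) / ((n : ℝ) + 1) ≤ 1 := by
        rw [div_le_one (by positivity)]; linarith
      linarith
    · rw [map_smul, norm_smul, Real.norm_eq_abs, abs_of_pos ht, htdef,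
        div_mul_cancel₀ _ hTy.ne']
  choose u v hu huv hTu hTv using hstep
  -- T ∘ u is bounded
  have hTub : Bornology.IsVonNBounded ℝ (Set.range fun n => T (u n)) := by
    rw [NormedSpace.isVonNBounded_iff, isBounded_iff_forall_norm_le]
    exact ⟨1, by rintro _ ⟨n, rfl⟩; exact hTu n⟩
  have hub : Bornology.IsVonNBounded ℝ (Set.range u) := hSPIB u hu hTub
  have hvb : Bornology.IsVonNBounded ℝ (Set.range v) := my_solid_bounded hE hu huv hub
  -- image under T is bounded
  have hTvb : Bornology.IsVonNBounded ℝ (⇑(⟨T, hTc⟩ : E →L[ℝ] X) '' Set.range v) :=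
    hvb.image _
  rw [NormedSpace.isVonNBounded_iff, isBounded_iff_forall_norm_le] at hTvb
  obtain ⟨C, hC⟩ := hTvb
  obtain ⟨n, hn⟩ := exists_nat_gt C
  have h1 : ‖T (v n)‖ ≤ C := hC _ ⟨v n, ⟨n, rfl⟩, rfl⟩
  have h2 : (n : ℝ) + 1 ≤ ‖T (v n)‖ := hTv n
  linarith
end
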